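/- arXiv:1712.01131 — 7 statements merged into one kernel-verified Lean document; each statement's English description precedes it below -/
import Mathlib

section
/- Let P ⊂ ℝⁿ be a compact convex polytope with nonempty interior containing the origin, and let θ be its extremal affine function. If max_{x∈P} θ(x) ≤ 1, then I_θ(f) ≥ 0 for every continuous convex function f : P → ℝ. -/
open MeasureTheory

/-- `P ⊆ ℝⁿ` is a (compact convex) polytope: the convex hull of finitely many points. -/
def IsPolytope {n : ℕ} (P : Set (Fin n → ℝ)) : Prop :=
  ∃ V : Finset (Fin n → ℝ), P = convexHull ℝ (V : Set (Fin n → ℝ))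

/-- `θ : ℝⁿ → ℝ` is an affine function. -/
def IsAffineFn {n : ℕ} (θ : (Fin n → ℝ) → ℝ) : Prop :=
  ∃ (a : Fin n → ℝ) (c : ℝ), ∀ x, θ x = (∑ i, a i * x i) + c

/-- `θ` is the extremal affine function of `P`: it is affine, `∫_P θ = 0`, and
`∫_P xᵢ θ = ∫_P xᵢ` for every `i`. -/
def IsExtremalAffine {n : ℕ} (P : Set (Fin n → ℝ)) (θ : (Fin n → ℝ) → ℝ) : Prop :=
  IsAffineFn θ ∧ (∫ x in P, θ x) = 0 ∧
    ∀ i : Fin n, (∫ x in P, x i * θ x) = ∫ x in P, x i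

/-- The relative Ding invariant `I_θ(f) = -f(0) + (1/vol P) ∫_P f (1 - θ)`. -/
noncomputable def DingI {n : ℕ} (P : Set (Fin n → ℝ)) (θ f : (Fin n → ℝ) → ℝ) : ℝ :=
  -f 0 + (1 / (volume P).toReal) * ∫ x in P, f x * (1 - θ x)

/-! Since `θ ≤ 1` on `P`, the weight `1 - θ` is nonnegative on `P`; the defining identities of the
extremal affine function say that `(1 - θ) dx` has total mass `vol P` and barycentre `0`. Jensen's
inequality for this measure is `f 0 ≤ (1 / vol P) ∫_P f (1 - θ)`. -/

section WeightedJensen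

variable {α E : Type*} [MeasurableSpace α] {μ : Measure α} [NormedAddCommGroup E]
  [NormedSpace ℝ E] {w : α → ℝ}

theorem integrable_withDensity_ofReal_iff (hw : 0 ≤ᵐ[μ] w) (hwm : AEMeasurable w μ) {f : α → E} :
    Integrable f (μ.withDensity fun x ↦ ENNReal.ofReal (w x)) ↔
      Integrable (fun x ↦ w x • f x) μ := by
  rw [integrable_withDensity_iff_integrable_smul₀' hwm.ennreal_ofReal
    (.of_forall fun _ ↦ ENNReal.ofReal_lt_top)]
  refine integrable_congr ?_
  filter_upwards [hw] with x hx using by rw [ENNReal.toReal_ofReal hx]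

theorem integral_withDensity_ofReal_eq_integral_smul (hw : 0 ≤ᵐ[μ] w) (hwm : AEMeasurable w μ)
    (f : α → E) :
    ∫ x, f x ∂μ.withDensity (fun x ↦ ENNReal.ofReal (w x)) = ∫ x, w x • f x ∂μ := by
  rw [integral_withDensity_eq_integral_toReal_smul₀ hwm.ennreal_ofReal
    (.of_forall fun _ ↦ ENNReal.ofReal_lt_top)]
  refine integral_congr_ae ?_
  filter_upwards [hw] with x hx using by rw [ENNReal.toReal_ofReal hx]

theorem ConvexOn.map_weighted_integral_le [CompleteSpace E] {s : Set E} {g : E → ℝ} {f : α → E}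
    (hg : ConvexOn ℝ s g) (hgc : ContinuousOn g s) (hsc : IsClosed s)
    (hfs : ∀ᵐ x ∂μ, f x ∈ s) (hw : 0 ≤ᵐ[μ] w) (hwi : Integrable w μ)
    (hw_pos : 0 < ∫ x, w x ∂μ) (hfi : Integrable (fun x ↦ w x • f x) μ)
    (hgi : Integrable (fun x ↦ w x * g (f x)) μ) :
    g ((∫ x, w x ∂μ)⁻¹ • ∫ x, w x • f x ∂μ) ≤ (∫ x, w x ∂μ)⁻¹ * ∫ x, w x * g (f x) ∂μ := by
  set ν := μ.withDensity fun x ↦ ENNReal.ofReal (w x)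
  have hν_univ : ν Set.univ = ENNReal.ofReal (∫ x, w x ∂μ) := by
    rw [withDensity_apply _ MeasurableSet.univ, Measure.restrict_univ,
      ofReal_integral_eq_lintegral_ofReal hwi hw]
  have : IsFiniteMeasure ν := ⟨by simp [hν_univ]⟩
  have : NeZero ν := ⟨fun h ↦ by simp [h] at hν_univ; linarith⟩
  have hjensen := hg.map_average_le (μ := ν) hgc hsc
    ((withDensity_absolutelyContinuous _ _).ae_le hfs)
    ((integrable_withDensity_ofReal_iff hw hwi.aemeasurable).2 hfi)
    ((integrable_withDensity_ofReal_iff hw hwi.aemeasurable).2 hgi)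
  rwa [average_eq, average_eq, measureReal_def, hν_univ, ENNReal.toReal_ofReal hw_pos.le,
    integral_withDensity_ofReal_eq_integral_smul hw hwi.aemeasurable,
    integral_withDensity_ofReal_eq_integral_smul hw hwi.aemeasurable] at hjensen

end WeightedJensen

section Polytope

variable {n : ℕ} {P : Set (Fin n → ℝ)} {θ : (Fin n → ℝ) → ℝ}

theorem IsPolytope.isCompact (hP : IsPolytope P) : IsCompact P := by
  obtain ⟨V, rfl⟩ := hP
  exact V.finite_toSet.isCompact_convexHull ℝ

theorem IsAffineFn.continuous (hθ : IsAffineFn θ) : Continuous θ := by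
  obtain ⟨a, c, hac⟩ := hθ
  rw [funext hac]
  fun_prop

namespace IsExtremalAffine

theorem integral_one_sub (hθ : IsExtremalAffine P θ) (hP : IsCompact P) :
    ∫ x in P, (1 - θ x) = volume.real P := by
  rw [integral_sub (integrableOn_const (C := (1 : ℝ)) hP.measure_lt_top.ne)
    (hθ.1.continuous.continuousOn.integrableOn_compact hP), hθ.2.1, setIntegral_const,
    smul_eq_mul, mul_one, sub_zero]

theorem integral_one_sub_smul (hθ : IsExtremalAffine P θ) (hP : IsCompact P) :
    ∫ x in P, (1 - θ x) • x = 0 := by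
  have hθc := hθ.1.continuous
  funext i
  rw [eval_integral (f := fun x ↦ (1 - θ x) • x) fun j ↦
    (by fun_prop : Continuous fun x ↦ ((1 - θ x) • x) j).continuousOn.integrableOn_compact hP]
  simp only [Pi.smul_apply, smul_eq_mul, sub_mul, one_mul, Pi.zero_apply]
  rw [integral_sub ((continuous_apply i).continuousOn.integrableOn_compact hP)
    ((by fun_prop : Continuous fun x : Fin n → ℝ ↦ θ x * x i).continuousOn.integrableOn_compact hP)]
  simp_rw [mul_comm (θ _), hθ.2.2 i, sub_self]

end IsExtremalAffine

end Polytope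

theorem ding_invariant_nonneg_general {n : ℕ} (P : Set (Fin n → ℝ))
    (hP : IsPolytope P) (hint : (interior P).Nonempty)
    (θ : (Fin n → ℝ) → ℝ) (hθ : IsExtremalAffine P θ)
    (hmax : ∀ x ∈ P, θ x ≤ 1)
    (f : (Fin n → ℝ) → ℝ) (hfc : ContinuousOn f P) (hfconv : ConvexOn ℝ P f) :
    0 ≤ DingI P θ f := by
  have hPc := hP.isCompact
  have hθc := hθ.1.continuous
  have hvol : 0 < volume.real P :=
    ENNReal.toReal_pos (Measure.measure_pos_of_nonempty_interior _ hint).ne' hPc.measure_lt_top.ne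
  have hweight : 0 ≤ᵐ[volume.restrict P] fun x ↦ 1 - θ x :=
    (ae_restrict_iff' hPc.measurableSet).2 (.of_forall fun x hx ↦ sub_nonneg.2 (hmax x hx))
  have hjensen := hfconv.map_weighted_integral_le hfc hPc.isClosed
    (ae_restrict_mem hPc.measurableSet) hweight
    ((continuous_const.sub hθc).continuousOn.integrableOn_compact hPc)
    (by rwa [hθ.integral_one_sub hPc])
    ((by fun_prop : Continuous fun x ↦ (1 - θ x) • x).continuousOn.integrableOn_compact hPc)
    (((continuous_const.sub hθc).continuousOn.mul hfc).integrableOn_compact hPc)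
  rw [hθ.integral_one_sub hPc, hθ.integral_one_sub_smul hPc, smul_zero] at hjensen
  simp_rw [mul_comm (1 - θ _)] at hjensen
  rw [DingI, ← measureReal_def, one_div]
  linarith

/-- If `max_P θ ≤ 1`, then `I_θ(f) ≥ 0` for every continuous convex function `f` on `P`. -/
theorem ding_invariant_nonneg {n : ℕ} (P : Set (Fin n → ℝ))
    (hP : IsPolytope P) (hint : (interior P).Nonempty) (h0 : (0 : Fin n → ℝ) ∈ P)
    (θ : (Fin n → ℝ) → ℝ) (hθ : IsExtremalAffine P θ)
    (hmax : ∀ x ∈ P, θ x ≤ 1)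
    (f : (Fin n → ℝ) → ℝ) (hfc : ContinuousOn f P) (hfconv : ConvexOn ℝ P f) :
    0 ≤ DingI P θ f :=
  ding_invariant_nonneg_general P hP hint θ hθ hmax f hfc hfconv
end

section
/- Let P ⊂ ℝⁿ be a compact convex polytope with nonempty interior containing the origin, and let θ be its extremal affine function. Suppose max_{x∈P} θ(x) ≤ 1. If f : P → ℝ is a continuous convex function with I_θ(f) = 0, then f is the restriction to P of an affine function. -/
open MeasureTheory

/-- If `max_P θ ≤ 1` and `f` is continuous convex on `P` with `I_θ(f) = 0`, then `f` is the
restriction to `P` of an affine function. -/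
theorem ding_invariant_zero_implies_affine {n : ℕ} (P : Set (Fin n → ℝ))
    (hP : IsPolytope P) (hint : (interior P).Nonempty) (h0 : (0 : Fin n → ℝ) ∈ P)
    (θ : (Fin n → ℝ) → ℝ) (hθ : IsExtremalAffine P θ)
    (hmax : ∀ x ∈ P, θ x ≤ 1)
    (f : (Fin n → ℝ) → ℝ) (hfc : ContinuousOn f P) (hfconv : ConvexOn ℝ P f)
    (hI : DingI P θ f = 0) :
    ∃ g : (Fin n → ℝ) → ℝ, IsAffineFn g ∧ ∀ x ∈ P, f x = g x := by
  classical
  obtain ⟨Vs, hVs⟩ := hP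
  have hPconv : Convex ℝ P := hVs ▸ convex_convexHull ℝ _
  have hPcomp : IsCompact P := hVs ▸ Vs.finite_toSet.isCompact_convexHull (𝕜 := ℝ)
  have hvol_pos : (0 : ENNReal) < volume P :=
    lt_of_lt_of_le (isOpen_interior.measure_pos volume hint) (measure_mono interior_subset)
  set vol : ℝ := (volume P).toReal with hvol_def
  have hvolR : 0 < vol := ENNReal.toReal_pos hvol_pos.ne' hPcomp.measure_lt_top.ne
  obtain ⟨a, c, hθeq⟩ := hθ.1
  have hθc : Continuous θ := by
    have h : θ = fun x => (∑ i, a i * x i) + c := funext hθeq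
    rw [h]
    exact (continuous_finset_sum _ fun i _ => continuous_const.mul (continuous_apply i)).add
      continuous_const
  have hwc : Continuous fun x : Fin n → ℝ => 1 - θ x := continuous_const.sub hθc
  have int_w : IntegrableOn (fun x : Fin n → ℝ => 1 - θ x) P volume :=
    hwc.continuousOn.integrableOn_compact hPcomp
  have int_xi : ∀ i, IntegrableOn (fun x : Fin n → ℝ => x i) P volume := fun i =>
    (continuous_apply i).continuousOn.integrableOn_compact hPcomp
  have int_xiθ : ∀ i, IntegrableOn (fun x : Fin n → ℝ => x i * θ x) P volume := fun i =>
    ((continuous_apply i).mul hθc).continuousOn.integrableOn_compact hPcomp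
  have int_xw : ∀ i, IntegrableOn (fun x : Fin n → ℝ => x i * (1 - θ x)) P volume := fun i =>
    ((continuous_apply i).mul hwc).continuousOn.integrableOn_compact hPcomp
  have Iw : (∫ x in P, (1 - θ x)) = vol := by
    rw [integral_sub (integrableOn_const (C := (1:ℝ)) hPcomp.measure_lt_top.ne)
      (hθc.continuousOn.integrableOn_compact hPcomp), hθ.2.1, sub_zero, setIntegral_const]
    simp [hvol_def, Measure.real]
  have Ixw : ∀ i, (∫ x in P, x i * (1 - θ x)) = 0 := by
    intro i
    have h : ∀ x : Fin n → ℝ, x i * (1 - θ x) = x i - x i * θ x := fun x => by ring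
    simp_rw [h]
    rw [integral_sub (int_xi i) (int_xiθ i), hθ.2.2 i, sub_self]
  -- the affine identity: ∫_P g (1-θ) = vol * g 0 for affine g
  have Iaff : ∀ (b : Fin n → ℝ) (d : ℝ) (g : (Fin n → ℝ) → ℝ),
      (∀ x, g x = (∑ i, b i * x i) + d) →
      (∫ x in P, g x * (1 - θ x)) = vol * d := by
    intro b d g hg
    have hrw : ∀ x : Fin n → ℝ, g x * (1 - θ x)
        = (∑ i, b i * (x i * (1 - θ x))) + d * (1 - θ x) := by
      intro x
      rw [hg x, add_mul, Finset.sum_mul]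
      congr 1
      exact Finset.sum_congr rfl fun i _ => by ring
    simp_rw [hrw]
    rw [integral_add (integrable_finset_sum _ fun i _ => (int_xw i).const_mul (b i))
        (int_w.const_mul d),
      integral_finset_sum _ fun i _ => (int_xw i).const_mul (b i)]
    simp_rw [integral_const_mul]
    rw [Iw]
    simp [Ixw]
    ring
  have hint_f : (∫ x in P, f x * (1 - θ x)) = vol * f 0 := by
    have h := hI
    unfold DingI at h
    rw [← hvol_def] at h
    have h2 : (1 / vol) * (∫ x in P, f x * (1 - θ x)) = f 0 := by linarith
    field_simp [hvolR.ne'] at h2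
    linarith
  -- sums of affine combos
  have hsum : ∀ (u v : Fin n → ℝ) (s r : ℝ),
      (∑ i, a i * (s * u i + r * v i)) = s * (∑ i, a i * u i) + r * (∑ i, a i * v i) := by
    intro u v s r
    rw [Finset.mul_sum, Finset.mul_sum, ← Finset.sum_add_distrib]
    exact Finset.sum_congr rfl fun i _ => by ring
  have hθcombo : ∀ (u v : Fin n → ℝ) (t : ℝ),
      θ (t • u + (1 - t) • v) = t * θ u + (1 - t) * θ v := by
    intro u v t
    simp only [hθeq, Pi.add_apply, Pi.smul_apply, smul_eq_mul]
    rw [hsum u v t (1 - t)]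
    ring
  -- a point in the interior where θ < 1
  obtain ⟨x₀, hx₀P, hx₀θ⟩ : ∃ x₀ ∈ interior P, θ x₀ < 1 := by
    by_contra hcon
    push_neg at hcon
    have hθ1 : ∀ x ∈ interior P, θ x = 1 := fun x hx =>
      le_antisymm (hmax x (interior_subset hx)) (hcon x hx)
    obtain ⟨z, hz⟩ := hint
    have ha0 : ∀ i, a i = 0 := by
      intro i
      have hc : Continuous fun s : ℝ => z + s • (Pi.single i (1 : ℝ) : Fin n → ℝ) := by
        exact continuous_const.add (continuous_id.smul continuous_const)
      have hev : ∀ᶠ s : ℝ in nhds 0, z + s • (Pi.single i (1 : ℝ) : Fin n → ℝ) ∈ interior P := by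
        have h1 := hc.continuousAt (x := (0 : ℝ))
        have h2 : z + (0 : ℝ) • (Pi.single i (1 : ℝ) : Fin n → ℝ) = z := by simp
        exact h1 (by simpa [h2] using isOpen_interior.mem_nhds hz)
      have hev2 : ∀ᶠ s : ℝ in nhdsWithin (0 : ℝ) (Set.Ioi (0 : ℝ)),
          z + s • (Pi.single i (1 : ℝ) : Fin n → ℝ) ∈ interior P :=
        hev.filter_mono nhdsWithin_le_nhds
      obtain ⟨δ, hδmem, hδpos⟩ := (hev2.and eventually_mem_nhdsWithin).exists
      have hθz := hθ1 z hz
      have hθzδ := hθ1 _ hδmem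
      have hsingle : (∑ j, a j * (δ • (Pi.single i (1 : ℝ) : Fin n → ℝ)) j) = δ * a i := by
        simp [Pi.single_apply, mul_comm, Finset.mul_sum]
      have : θ (z + δ • (Pi.single i (1 : ℝ) : Fin n → ℝ)) = θ z + δ * a i := by
        simp only [hθeq, Pi.add_apply]
        rw [show (∑ j, a j * (z j + (δ • (Pi.single i (1 : ℝ) : Fin n → ℝ)) j))
            = (∑ j, a j * z j) + ∑ j, a j * (δ • (Pi.single i (1 : ℝ) : Fin n → ℝ)) j by
          rw [← Finset.sum_add_distrib]; exact Finset.sum_congr rfl fun j _ => by ring]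
        rw [hsingle]; ring
      rw [hθzδ, hθz] at this
      have : δ * a i = 0 := by linarith
      rcases mul_eq_zero.mp this with h | h
      · exact absurd h (ne_of_gt hδpos)
      · exact h
    have hθconst : ∀ x, θ x = c := by
      intro x; rw [hθeq]; simp [ha0]
    have h1 : (∫ x in P, θ x) = c * vol := by
      simp_rw [hθconst, setIntegral_const]
      simp [hvol_def, mul_comm, Measure.real]
    rw [hθ.2.1] at h1
    have hc0 : c = 0 := by
      rcases mul_eq_zero.mp h1.symm with h | h
      · exact h
      · exact absurd h hvolR.ne'
    have := hθ1 z hz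
    rw [hθconst z, hc0] at this
    norm_num at this
  -- key lemma: nonneg on interior, zero weighted integral ⇒ vanishes on P
  have key : ∀ g : (Fin n → ℝ) → ℝ, ContinuousOn g P → (∀ x ∈ interior P, 0 ≤ g x) →
      (∫ x in P, g x * (1 - θ x)) = 0 → ∀ x ∈ P, g x = 0 := by
    intro g hgc hgnn hgint x hx
    have int_gw : IntegrableOn (fun y => g y * (1 - θ y)) P volume :=
      (hgc.mul hwc.continuousOn).integrableOn_compact hPcomp
    have hfr : volume (frontier P) = 0 := hPconv.addHaar_frontier volume
    have hae : (interior P : Set (Fin n → ℝ)) =ᵐ[volume] P := interior_ae_eq_of_null_frontier hfr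
    have hint_eq : (∫ y in interior P, g y * (1 - θ y)) = ∫ y in P, g y * (1 - θ y) :=
      setIntegral_congr_set hae
    have int_gw' : IntegrableOn (fun y => g y * (1 - θ y)) (interior P) volume :=
      int_gw.mono_set interior_subset
    have hnn : 0 ≤ᵐ[volume.restrict (interior P)] fun y => g y * (1 - θ y) := by
      rw [Filter.EventuallyLE, ae_restrict_iff' isOpen_interior.measurableSet]
      exact Filter.Eventually.of_forall fun y hy =>
        mul_nonneg (hgnn y hy) (by linarith [hmax y (interior_subset hy)])
    have hzero : (fun y => g y * (1 - θ y)) =ᵐ[volume.restrict (interior P)] 0 := by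
      rw [← integral_eq_zero_iff_of_nonneg_ae hnn int_gw']
      rw [hint_eq, hgint]
    -- step 1: g vanishes on interior P ∩ {θ < 1}
    have hV0 : ∀ y ∈ interior P, θ y < 1 → g y = 0 := by
      intro y hy hyθ
      by_contra hgy
      have hgy' : 0 < g y * (1 - θ y) :=
        mul_pos ((hgnn y hy).lt_of_ne (Ne.symm hgy)) (by linarith)
      have hcy : ContinuousAt (fun z => g z * (1 - θ z)) y := by
        have h1 : ContinuousAt g y :=
          hgc.continuousAt (Filter.mem_of_superset (isOpen_interior.mem_nhds hy) interior_subset)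
        exact h1.mul hwc.continuousAt
      have hev : ∀ᶠ z in nhds y, 0 < g z * (1 - θ z) := hcy.eventually (eventually_gt_nhds hgy')
      obtain ⟨W, hWsub, hWopen, hyW⟩ :=
        mem_nhds_iff.mp (Filter.inter_mem hev (isOpen_interior.mem_nhds hy))
      have hres : (fun z => g z * (1 - θ z)) =ᵐ[volume.restrict W] 0 :=
        hzero.filter_mono (ae_mono (Measure.restrict_mono (fun z hz => (hWsub hz).2) le_rfl))
      have hWnull : ∀ᵐ z ∂volume.restrict W, z ∉ W := by
        filter_upwards [hres] with z hz hzW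
        exact absurd hz (ne_of_gt (hWsub hzW).1)
      have hW0 : volume.restrict W W = 0 := by
        have h5 := hWnull
        rw [Filter.eventually_iff, mem_ae_iff] at h5
        rw [show ({z : Fin n → ℝ | z ∉ W}ᶜ : Set (Fin n → ℝ)) = W by ext z; simp] at h5
        exact h5
      rw [Measure.restrict_apply_self] at hW0
      exact absurd hW0 (hWopen.measure_pos volume ⟨y, hyW⟩).ne'
    -- step 2: propagate to all of P by continuity along segments
    set γ : ℝ → (Fin n → ℝ) := fun t => t • x₀ + (1 - t) • x with hγdef
    have hγc : Continuous γ :=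
      (continuous_id.smul continuous_const).add ((continuous_const.sub continuous_id).smul
        continuous_const)
    have hγ0 : γ 0 = x := by simp [hγdef]
    have hγtendsto : Filter.Tendsto γ (nhdsWithin 0 (Set.Ioi (0:ℝ))) (nhds x) := by
      have h1 := hγc.tendsto 0
      rw [hγ0] at h1
      exact h1.mono_left nhdsWithin_le_nhds
    have hmem : ∀ᶠ t in nhdsWithin 0 (Set.Ioi (0:ℝ)), γ t ∈ interior P ∧ θ (γ t) < 1 := by
      filter_upwards [Ioo_mem_nhdsGT_of_mem (by norm_num : (0:ℝ) ∈ Set.Ico 0 1)] with t ht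
      refine ⟨hPconv.combo_interior_closure_mem_interior hx₀P (subset_closure hx) ht.1
        (by linarith [ht.2]) (by ring), ?_⟩
      rw [hθcombo x₀ x t]
      nlinarith [hmax x hx, ht.1, ht.2]
    have hgγ : ∀ᶠ t in nhdsWithin 0 (Set.Ioi (0:ℝ)), g (γ t) = 0 := by
      filter_upwards [hmem] with t ht
      exact hV0 _ ht.1 ht.2
    have h1 : Filter.Tendsto (g ∘ γ) (nhdsWithin 0 (Set.Ioi (0:ℝ))) (nhds (g x)) := by
      apply (hgc.continuousWithinAt hx).tendsto.comp
      exact tendsto_nhdsWithin_of_tendsto_nhds_of_eventually_within γ hγtendsto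
        (hmem.mono fun t ht => interior_subset ht.1)
    have h2 : Filter.Tendsto (g ∘ γ) (nhdsWithin 0 (Set.Ioi (0:ℝ))) (nhds 0) :=
      Filter.Tendsto.congr' (hgγ.mono fun t ht => ht.symm) tendsto_const_nhds
    exact tendsto_nhds_unique h1 h2
  -- separation: the open strict epigraph over the interior
  have hSopen : IsOpen {p : (Fin n → ℝ) × ℝ | p.1 ∈ interior P ∧ f p.1 < p.2} := by
    have h1 : ContinuousOn (fun p : (Fin n → ℝ) × ℝ => f p.1 - p.2)
        (interior P ×ˢ (Set.univ : Set ℝ)) :=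
      ((hfc.mono interior_subset).comp continuous_fst.continuousOn fun p hp => hp.1).sub
        continuous_snd.continuousOn
    have h2 := h1.isOpen_inter_preimage (isOpen_interior.prod isOpen_univ)
      (isOpen_Iio (a := (0:ℝ)))
    convert h2 using 1
    ext p
    simp [Set.mem_prod, sub_lt_zero, and_comm]
  have hSconv : Convex ℝ {p : (Fin n → ℝ) × ℝ | p.1 ∈ interior P ∧ f p.1 < p.2} := by
    rintro ⟨p1, p2⟩ ⟨hp1, hp2⟩ ⟨q1, q2⟩ ⟨hq1, hq2⟩ s r hs hr hsr
    have hmem1 : s • p1 + r • q1 ∈ interior P := hPconv.interior hp1 hq1 hs hr hsr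
    have h1 := hfconv.2 (interior_subset hp1) (interior_subset hq1) hs hr hsr
    have h2 : s * f p1 + r * f q1 < s * p2 + r * q2 := by
      rcases hs.eq_or_lt with h | h
      · have hr1 : r = 1 := by linarith
        rw [← h, hr1]; simpa using hq2
      · have h3 := mul_lt_mul_of_pos_left hp2 h
        have h4 := mul_le_mul_of_nonneg_left hq2.le hr
        linarith
    constructor
    · simpa using hmem1
    · simp only [Prod.smul_mk, Prod.mk_add_mk, smul_eq_mul]
      calc f (s • p1 + r • q1) ≤ s * f p1 + r * f q1 := by simpa [smul_eq_mul] using h1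
        _ < s * p2 + r * q2 := h2
  have h0S : ((0 : Fin n → ℝ), f 0) ∉ {p : (Fin n → ℝ) × ℝ | p.1 ∈ interior P ∧ f p.1 < p.2} :=
    fun h => lt_irrefl _ h.2
  obtain ⟨φ, hφ⟩ := geometric_hahn_banach_open_point hSconv hSopen h0S
  set Lm : (Fin n → ℝ) →L[ℝ] ℝ := φ.comp (ContinuousLinearMap.inl ℝ (Fin n → ℝ) ℝ) with hLm
  set β : ℝ := φ ((0 : Fin n → ℝ), (1 : ℝ)) with hβd
  have hLm0 : ∀ y : Fin n → ℝ, Lm y = φ (y, 0) := fun y => by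
    simp [hLm]
  have hφsplit : ∀ (y : Fin n → ℝ) (t : ℝ), φ (y, t) = Lm y + t * β := by
    intro y t
    have h1 : (y, t) = ((y, 0) : (Fin n → ℝ) × ℝ) + t • ((0 : Fin n → ℝ), (1 : ℝ)) := by
      simp [Prod.ext_iff]
    rw [h1, φ.map_add, φ.map_smul, smul_eq_mul, hLm0]
  have hφ0 : φ ((0 : Fin n → ℝ), f 0) = f 0 * β := by
    rw [hφsplit 0 (f 0)]
    simp
  have hmain : ∀ y ∈ interior P, ∀ t : ℝ, f y < t → Lm y + t * β < f 0 * β := by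
    intro y hy t ht
    have := hφ (y, t) ⟨hy, ht⟩
    rwa [hφsplit y t, hφ0] at this
  have hβ : β ≤ 0 := by
    by_contra hcon
    push_neg at hcon
    obtain ⟨z, hz⟩ := hint
    set t : ℝ := max (f z + 1) ((f 0 * β - Lm z) / β + 1) with ht
    have h1 := hmain z hz t (lt_of_lt_of_le (lt_add_one _) (le_max_left _ _))
    have h2 : (f 0 * β - Lm z) / β ≤ t := by
      have := le_max_right (f z + 1) ((f 0 * β - Lm z) / β + 1)
      linarith
    have h3 : f 0 * β - Lm z ≤ t * β := by rwa [div_le_iff₀ hcon] at h2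
    linarith
  -- expansion of Lm along coordinates
  have hLsum : ∀ y : Fin n → ℝ, Lm y = ∑ i, Lm (Pi.single i 1) * y i := by
    intro y
    have hy : (∑ i, y i • (Pi.single i (1 : ℝ) : Fin n → ℝ)) = y := by
      ext j
      simp [Pi.single_apply]
    conv_lhs => rw [← hy]
    rw [_root_.map_sum]
    exact Finset.sum_congr rfl fun i _ => by rw [Lm.map_smul]; simp [mul_comm]
  have hLmc : Continuous fun y : Fin n → ℝ => Lm y := Lm.continuous
  rcases hβ.lt_or_eq with hβneg | hβ0
  · -- β < 0 : build the supporting affine function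
    have hβne : β ≠ 0 := ne_of_lt hβneg
    have hγpos : 0 < -(1 / β) := by
      have : 1 / β < 0 := div_neg_of_pos_of_neg one_pos hβneg
      linarith
    set ℓ : (Fin n → ℝ) → ℝ := fun y => f 0 + (-(1 / β)) * Lm y with hℓdef
    have hℓaff : ∀ y, ℓ y = (∑ i, ((-(1 / β)) * Lm (Pi.single i 1)) * y i) + f 0 := by
      intro y
      rw [hℓdef]
      simp only []
      rw [hLsum y, Finset.mul_sum]
      rw [add_comm]
      congr 1
      exact Finset.sum_congr rfl fun i _ => by ring
    have hℓle : ∀ y ∈ interior P, ℓ y ≤ f y := by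
      intro y hy
      have hstep : Lm y + f y * β ≤ f 0 * β := by
        by_contra hcon
        push_neg at hcon
        set ε : ℝ := (Lm y + f y * β - f 0 * β) / (-β) with hε
        have hεpos : 0 < ε := div_pos (by linarith) (by linarith)
        have h1 := hmain y hy (f y + ε) (by linarith)
        have hεβ : ε * β = -(Lm y + f y * β - f 0 * β) := by
          rw [hε, div_mul_eq_mul_div, div_neg, mul_div_assoc, div_self hβne, mul_one]
        rw [add_mul] at h1
        linarith
      have h2 : Lm y ≤ (f y - f 0) * (-β) := by nlinarith
      have h3 : Lm y / (-β) ≤ f y - f 0 := (div_le_iff₀ (by linarith)).mpr h2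
      have h4 : -(1 / β) * Lm y = Lm y / (-β) := by
        rw [div_neg, neg_mul, one_div_mul_eq_div]
      rw [hℓdef]
      simp only []
      linarith
    have hℓc : Continuous ℓ := continuous_const.add (continuous_const.mul hLmc)
    have hint_ℓ : (∫ y in P, ℓ y * (1 - θ y)) = vol * f 0 :=
      Iaff (fun i => (-(1 / β)) * Lm (Pi.single i 1)) (f 0) ℓ hℓaff
    have int_fw' : IntegrableOn (fun y => f y * (1 - θ y)) P volume :=
      (hfc.mul hwc.continuousOn).integrableOn_compact hPcomp
    have int_lw : IntegrableOn (fun y => ℓ y * (1 - θ y)) P volume :=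
      (hℓc.continuousOn.mul hwc.continuousOn).integrableOn_compact hPcomp
    have hzero : (∫ y in P, (f y - ℓ y) * (1 - θ y)) = 0 := by
      have hrw : ∀ y : Fin n → ℝ, (f y - ℓ y) * (1 - θ y)
          = f y * (1 - θ y) - ℓ y * (1 - θ y) := fun y => by ring
      simp_rw [hrw]
      rw [integral_sub int_fw' int_lw, hint_f, hint_ℓ, sub_self]
    have hkey := key (fun y => f y - ℓ y) (hfc.sub hℓc.continuousOn)
      (fun y hy => sub_nonneg.2 (hℓle y hy)) hzero
    refine ⟨ℓ, ⟨fun i => (-(1 / β)) * Lm (Pi.single i 1), f 0, hℓaff⟩, fun x hx => ?_⟩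
    have h5 : f x - ℓ x = 0 := hkey x hx
    linarith
  · -- β = 0 : contradiction
    exfalso
    have hLneg : ∀ y ∈ interior P, Lm y < 0 := by
      intro y hy
      have h1 := hmain y hy (f y + 1) (lt_add_one _)
      rw [hβ0] at h1
      simpa using h1
    have haff : ∀ y : Fin n → ℝ, -(Lm y) = (∑ i, (-(Lm (Pi.single i 1))) * y i) + 0 := by
      intro y
      rw [hLsum y, add_zero, ← Finset.sum_neg_distrib]
      exact Finset.sum_congr rfl fun i _ => by ring
    have hzero : (∫ y in P, (-(Lm y)) * (1 - θ y)) = 0 := by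
      rw [Iaff (fun i => -(Lm (Pi.single i 1))) 0 (fun y => -(Lm y)) haff, mul_zero]
    have hkey := key (fun y => -(Lm y)) (hLmc.neg.continuousOn)
      (fun y hy => neg_nonneg.mpr (hLneg y hy).le) hzero
    obtain ⟨z, hz⟩ := hint
    have h1 : -(Lm z) = 0 := hkey z (interior_subset hz)
    have h2 := hLneg z hz
    linarith
end

section
/- Let P ⊂ ℝⁿ be a compact convex polytope with nonempty interior containing the origin, let θ be its extremal affine function, and set ℓ(x) := (1 − θ(x))/vol(P) and ℓ⁺(x) := max{0, ℓ(x)}. Then I_θ(ℓ⁺) = −∫_{{x ∈ P : ℓ(x) < 0}} ℓ(x)² dx. -/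
open MeasureTheory

/-- With `ℓ(x) = (1 - θ(x))/vol(P)` and `ℓ⁺ = max {0, ℓ}`, one has
`I_θ(ℓ⁺) = -∫_{{x ∈ P : ℓ(x) < 0}} ℓ²`. -/
theorem ding_invariant_ell_plus {n : ℕ} (P : Set (Fin n → ℝ))
    (hP : IsPolytope P) (hint : (interior P).Nonempty) (h0 : (0 : Fin n → ℝ) ∈ P)
    (θ : (Fin n → ℝ) → ℝ) (hθ : IsExtremalAffine P θ) :
    DingI P θ (fun x => max 0 ((1 - θ x) / (volume P).toReal))
      = - ∫ x in {x | x ∈ P ∧ (1 - θ x) / (volume P).toReal < 0},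
            ((1 - θ x) / (volume P).toReal) ^ 2 := by
  obtain ⟨⟨a, c, hac⟩, hI0, hIi⟩ := hθ
  obtain ⟨Vs, hVs⟩ := hP
  have hPc : IsCompact P := by
    rw [hVs]; exact Vs.finite_toSet.isCompact_convexHull ℝ
  have hPm : MeasurableSet P := hPc.measurableSet
  have hVlt : volume P < ⊤ := hPc.measure_lt_top
  have hVpos : 0 < volume P :=
    lt_of_lt_of_le (isOpen_interior.measure_pos volume hint) (measure_mono interior_subset)
  set V : ℝ := (volume P).toReal with hVdef
  have hV : 0 < V := ENNReal.toReal_pos hVpos.ne' hVlt.ne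
  have hθc : Continuous θ := by
    have : θ = fun x => (∑ i, a i * x i) + c := funext hac
    rw [this]
    exact (continuous_finset_sum _ fun i _ =>
      continuous_const.mul (continuous_apply i)).add continuous_const
  have hfin : volume.restrict P ≠ 0 → True := fun _ => trivial
  -- integrability of continuous functions on P
  have hIntOn : ∀ f : (Fin n → ℝ) → ℝ, Continuous f → IntegrableOn f P := fun f hf =>
    hf.continuousOn.integrableOn_compact hPc
  have hθint : IntegrableOn θ P := hIntOn θ hθc
  have hxiint : ∀ i : Fin n, IntegrableOn (fun x => x i) P :=
    fun i => hIntOn _ (continuous_apply i)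
  have hxiθint : ∀ i : Fin n, IntegrableOn (fun x => x i * θ x) P :=
    fun i => hIntOn _ ((continuous_apply i).mul hθc)
  have hconstint : IntegrableOn (fun _ : Fin n → ℝ => (1:ℝ)) P :=
    hIntOn _ continuous_const
  -- ∑ aᵢ ∫ xᵢ = -c V
  have hsum : (∑ i, a i * ∫ x in P, x i) = - (c * V) := by
    have h1 : (∫ x in P, θ x) = (∑ i, a i * ∫ x in P, x i) + c * V := by
      calc (∫ x in P, θ x) = ∫ x in P, ((∑ i, a i * x i) + c) := by
              exact setIntegral_congr_fun hPm fun x _ => hac x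
        _ = (∫ x in P, (∑ i, a i * x i)) + ∫ x in P, (c : ℝ) := by
              refine integral_add ?_ (integrableOn_const hVlt.ne)
              exact hIntOn _ (continuous_finset_sum _ fun i _ =>
                continuous_const.mul (continuous_apply i))
        _ = (∑ i, a i * ∫ x in P, x i) + c * V := by
              rw [integral_finset_sum _ (fun i _ => (hxiint i).const_mul (a i)),
                setIntegral_const]
              simp only [integral_const_mul, smul_eq_mul, mul_comm, measureReal_def, ← hVdef]
    rw [hI0] at h1
    linarith
  -- ∫_P θ² = -c V
  have hθsq : (∫ x in P, θ x * θ x) = - (c * V) := by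
    calc (∫ x in P, θ x * θ x)
        = ∫ x in P, ((∑ i, a i * (x i * θ x)) + c * θ x) := by
          refine setIntegral_congr_fun hPm fun x _ => ?_
          nth_rewrite 1 [hac x]
          rw [add_mul, Finset.sum_mul]
          simp [mul_assoc]
      _ = (∑ i, a i * ∫ x in P, x i * θ x) + c * ∫ x in P, θ x := by
          rw [integral_add
            (hIntOn (fun x => ∑ i, a i * (x i * θ x)) (continuous_finset_sum _ fun i _ =>
              continuous_const.mul ((continuous_apply i).mul hθc)))
            (hθint.const_mul c),
            integral_finset_sum _ (fun i _ => (hxiθint i).const_mul (a i)),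
            integral_const_mul]
          simp only [integral_const_mul]
      _ = - (c * V) := by
          rw [hI0]
          simp only [hIi, mul_zero, add_zero]
          exact hsum
  -- ∫_P (1-θ)² = (1-c) V
  have hsq : (∫ x in P, (1 - θ x) ^ 2) = (1 - c) * V := by
    calc (∫ x in P, (1 - θ x) ^ 2)
        = ∫ x in P, ((1:ℝ) + (θ x * θ x + (-2) * θ x)) := by
          refine setIntegral_congr_fun hPm fun x _ => by ring
      _ = V + ((∫ x in P, θ x * θ x) + (-2) * ∫ x in P, θ x) := by
          rw [integral_add hconstint
            (hIntOn (fun x => θ x * θ x + -2 * θ x) ((hθc.mul hθc).add (continuous_const.mul hθc))),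
            integral_add (hIntOn (fun x => θ x * θ x) (hθc.mul hθc)) (hIntOn (fun x => -2 * θ x) (continuous_const.mul hθc)),
            integral_const_mul, setIntegral_const]
          simp only [smul_eq_mul, measureReal_def, ← hVdef, mul_one]
      _ = (1 - c) * V := by rw [hθsq, hI0]; ring
  -- ℓ, basic facts
  set ℓ : (Fin n → ℝ) → ℝ := fun x => (1 - θ x) / V with hℓdef
  have hℓc : Continuous ℓ := (continuous_const.sub hθc).div_const V
  have hℓ0 : ℓ 0 = (1 - c) / V := by
    simp only [hℓdef]
    rw [hac 0]
    simp
  have hℓsqint : IntegrableOn (fun x => ℓ x ^ 2) P := hIntOn _ (hℓc.pow 2)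
  have hℓsq : (∫ x in P, ℓ x ^ 2) = (1 - c) / V := by
    have : (∫ x in P, ℓ x ^ 2) = (∫ x in P, (1 - θ x)^2) / V^2 := by
      rw [← integral_div]
      exact setIntegral_congr_fun hPm fun x _ => by
        simp only [hℓdef]; rw [div_pow]
    rw [this, hsq]
    field_simp
  have hℓ0nonneg : 0 ≤ ℓ 0 := by
    rw [hℓ0, ← hℓsq]
    exact setIntegral_nonneg hPm fun x _ => sq_nonneg _
  -- the negative set
  set S : Set (Fin n → ℝ) := {x | ℓ x < 0} with hSdef
  have hSm : MeasurableSet S := measurableSet_lt hℓc.measurable measurable_const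
  have htarget : {x | x ∈ P ∧ (1 - θ x) / (volume P).toReal < 0} = P ∩ S := rfl
  have hindint : IntegrableOn (S.indicator fun x => ℓ x ^ 2) P :=
    hℓsqint.indicator hSm
  have hIneg : (∫ x in P ∩ S, ℓ x ^ 2) = ∫ x in P, S.indicator (fun x => ℓ x ^ 2) x := by
    rw [setIntegral_indicator hSm]
  -- pointwise identity
  have hpt : ∀ x, max 0 (ℓ x) * (1 - θ x)
      = V * (ℓ x ^ 2 - S.indicator (fun x => ℓ x ^ 2) x) := by
    intro x
    have h1θ : 1 - θ x = V * ℓ x := by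
      simp only [hℓdef]; field_simp
    rcases lt_or_ge (ℓ x) 0 with h | h
    · rw [max_eq_left h.le, Set.indicator_of_mem (show x ∈ S from h)]
      ring
    · rw [max_eq_right h, Set.indicator_of_notMem (by simpa [hSdef, not_lt] using h), h1θ]
      ring
  -- main integral
  have hmain : (∫ x in P, max 0 (ℓ x) * (1 - θ x))
      = V * ((∫ x in P, ℓ x ^ 2) - ∫ x in P ∩ S, ℓ x ^ 2) := by
    rw [hIneg, ← integral_sub hℓsqint hindint, ← integral_const_mul]
    exact setIntegral_congr_fun hPm fun x _ => hpt x
  -- conclude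
  rw [htarget]
  show -max 0 (ℓ 0) + (1 / V) * (∫ x in P, max 0 (ℓ x) * (1 - θ x))
      = - ∫ x in P ∩ S, ℓ x ^ 2
  rw [hmain, max_eq_right hℓ0nonneg, hℓ0, ← hℓsq]
  field_simp
  ring
end

section
/- Let P ⊂ ℝⁿ be a compact convex polytope with nonempty interior containing the origin, and let θ be its extremal affine function. If I_θ(f) ≥ 0 for every rational piecewise affine convex function f on P, then θ(x) ≤ 1 for all x ∈ P. -/
set_option maxHeartbeats 1000000


open MeasureTheory

/-- `f` is a rational piecewise affine convex function: a finite maximum of affine functions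
with rational coefficients. -/
def IsRatPLConvex {n : ℕ} (f : (Fin n → ℝ) → ℝ) : Prop :=
  ∃ (m : ℕ) (a : Fin (m + 1) → Fin n → ℚ) (c : Fin (m + 1) → ℚ),
    ∀ x, f x = Finset.univ.sup' Finset.univ_nonempty
      (fun k : Fin (m + 1) => (∑ i, (a k i : ℝ) * x i) + (c k : ℝ))

/-- `f` is normalized on `P`: `min_P f = f 0 = 0`. -/
def IsNormalized {n : ℕ} (P : Set (Fin n → ℝ)) (f : (Fin n → ℝ) → ℝ) : Prop :=
  f 0 = 0 ∧ ∀ x ∈ P, 0 ≤ f x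

/-- `sup'` over `Fin 2` is a binary `max`. -/
lemma fin2_sup'_eq_max (g : Fin 2 → ℝ) :
    Finset.univ.sup' Finset.univ_nonempty g = max (g 0) (g 1) := by
  apply le_antisymm
  · apply Finset.sup'_le
    intro k _
    fin_cases k
    · exact le_max_left _ _
    · exact le_max_right _ _
  · exact max_le (Finset.le_sup' g (Finset.mem_univ 0)) (Finset.le_sup' g (Finset.mem_univ 1))

/-- If `I_θ(f) ≥ 0` for every rational piecewise affine convex function `f` on `P`, then
`θ ≤ 1` on `P`. -/
theorem semistable_implies_theta_le_one {n : ℕ} (P : Set (Fin n → ℝ))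
    (hP : IsPolytope P) (hint : (interior P).Nonempty) (h0 : (0 : Fin n → ℝ) ∈ P)
    (θ : (Fin n → ℝ) → ℝ) (hθ : IsExtremalAffine P θ)
    (hss : ∀ f : (Fin n → ℝ) → ℝ, IsRatPLConvex f → 0 ≤ DingI P θ f) :
    ∀ x ∈ P, θ x ≤ 1 := by
  by_contra hcon
  push_neg at hcon
  obtain ⟨x₀, hx₀P, hx₀⟩ := hcon
  obtain ⟨a, c, ha⟩ := hθ.1
  obtain ⟨V, hV⟩ := hP
  have hPcomp : IsCompact P := hV ▸ V.finite_toSet.isCompact_convexHull (𝕜 := ℝ)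
  have hPconv : Convex ℝ P := hV ▸ convex_convexHull ℝ _
  have hPmeas : MeasurableSet P := hPcomp.isClosed.measurableSet
  have hθcont : Continuous θ := by
    have hfe : θ = fun x => (∑ i, a i * x i) + c := funext ha
    rw [hfe]
    exact (continuous_finset_sum _ fun i _ =>
      continuous_const.mul (continuous_apply i)).add continuous_const
  set ε := θ x₀ - 1 with hεdef
  have hεpos : 0 < ε := by simp only [hεdef]; linarith
  clear_value ε
  -- a uniform bound on the coordinates of points in `P`
  obtain ⟨R₀, hR₀⟩ := isBounded_iff_forall_norm_le.1 hPcomp.isBounded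
  set R := max R₀ 1 with hRdef
  have hR1 : (1 : ℝ) ≤ R := le_max_right _ _
  have hRpos : (0 : ℝ) < R := lt_of_lt_of_le one_pos hR1
  have hRx : ∀ x ∈ P, ∀ i, |x i| ≤ R := fun x hx i =>
    le_trans (by simpa using norm_le_pi_norm x i) (le_trans (hR₀ x hx) (le_max_left _ _))
  clear_value R
  -- rational approximation `ℓ` of `θ - (1 + ε/2)` on `P`, up to `ε/4`
  have hden : (0 : ℝ) < (n : ℝ) * R + 1 := by positivity
  set δ' := ε / 4 / ((n : ℝ) * R + 1) with hδ'def
  have hδ'pos : 0 < δ' := div_pos (by linarith) hden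
  clear_value δ'
  choose b hb1 hb2 using fun i => exists_rat_btwn (show a i - δ' < a i by linarith)
  obtain ⟨d, hd1, hd2⟩ :=
    exists_rat_btwn (show c - (1 + ε / 2) - δ' < c - (1 + ε / 2) by linarith)
  set ℓ : (Fin n → ℝ) → ℝ := fun x => (∑ i, (b i : ℝ) * x i) + (d : ℝ) with hℓdef
  have hℓcont : Continuous ℓ := (continuous_finset_sum _ fun i _ =>
    continuous_const.mul (continuous_apply i)).add continuous_const
  clear_value ℓ
  have happrox : ∀ x ∈ P, |ℓ x - (θ x - (1 + ε / 2))| ≤ ε / 4 := by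
    intro x hx
    have h1 : ℓ x - (θ x - (1 + ε / 2))
        = (∑ i, ((b i : ℝ) - a i) * x i) + ((d : ℝ) - (c - (1 + ε / 2))) := by
      have hs : (∑ i, ((b i : ℝ) - a i) * x i)
          = (∑ i, (b i : ℝ) * x i) - ∑ i, a i * x i := by
        rw [← Finset.sum_sub_distrib]
        exact Finset.sum_congr rfl fun i _ => by ring
      rw [ha x, hℓdef, hs]; ring
    have h2 : |∑ i, ((b i : ℝ) - a i) * x i| ≤ (n : ℝ) * (δ' * R) := by
      refine le_trans (Finset.abs_sum_le_sum_abs _ _) ?_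
      have hterm : ∀ i ∈ Finset.univ, |((b i : ℝ) - a i) * x i| ≤ δ' * R := by
        intro i _
        rw [abs_mul]
        have hbd : |(b i : ℝ) - a i| ≤ δ' := by
          rw [abs_le]
          constructor
          · linarith [hb1 i]
          · linarith [hb2 i, hδ'pos]
        exact mul_le_mul hbd (hRx x hx i) (abs_nonneg _) hδ'pos.le
      refine le_trans (Finset.sum_le_sum hterm) ?_
      simp [Finset.sum_const, Finset.card_univ, nsmul_eq_mul]
    have h3 : |(d : ℝ) - (c - (1 + ε / 2))| ≤ δ' := by
      rw [abs_le]
      constructor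
      · linarith
      · linarith
    have h4 : (n : ℝ) * (δ' * R) + δ' = δ' * ((n : ℝ) * R + 1) := by ring
    have h5 : δ' * ((n : ℝ) * R + 1) = ε / 4 := by
      rw [hδ'def]; field_simp
    calc |ℓ x - (θ x - (1 + ε / 2))|
        ≤ |∑ i, ((b i : ℝ) - a i) * x i| + |(d : ℝ) - (c - (1 + ε / 2))| := by
          rw [h1]; exact abs_add_le _ _
      _ ≤ (n : ℝ) * (δ' * R) + δ' := add_le_add h2 h3
      _ = ε / 4 := by rw [h4, h5]
  -- an interior point where `θ > 1 + 7ε/8`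
  obtain ⟨y, hy⟩ := id hint
  have hθcombo : ∀ s : ℝ, θ ((1 - s) • x₀ + s • y) = (1 - s) * θ x₀ + s * θ y := by
    intro s
    have hxi : ∀ i, ((1 - s) • x₀ + s • y) i = (1 - s) * x₀ i + s * y i := fun i => rfl
    rw [ha, ha, ha]
    simp only [hxi]
    have hterm : ∀ i, a i * ((1 - s) * x₀ i + s * y i)
        = (1 - s) * (a i * x₀ i) + s * (a i * y i) := fun i => by ring
    simp_rw [hterm, Finset.sum_add_distrib, ← Finset.mul_sum]
    ring
  set M := |θ x₀ - θ y| with hMdef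
  have hM0 : 0 ≤ M := abs_nonneg _
  set s := min 1 (ε / (8 * (M + 1))) with hsdef
  have hspos : 0 < s := lt_min one_pos (by positivity)
  have hs1 : s ≤ 1 := min_le_left _ _
  set z := (1 - s) • x₀ + s • y with hzdef
  have hzint : z ∈ interior P := by
    have hcombo := hPconv.combo_interior_self_mem_interior hy hx₀P hspos
      (by linarith : (0:ℝ) ≤ 1 - s) (by ring : s + (1 - s) = 1)
    rw [hzdef, add_comm]
    exact hcombo
  have hθz : 1 + 13 * ε / 16 < θ z := by
    have h1 : θ z = θ x₀ + s * (θ y - θ x₀) := by rw [hzdef, hθcombo]; ring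
    have hsle : s ≤ ε / (8 * (M + 1)) := min_le_right _ _
    have h2 : s * M ≤ ε / (8 * (M + 1)) * (M + 1) :=
      le_trans (by nlinarith) (mul_le_mul_of_nonneg_right hsle (by linarith))
    have h3 : ε / (8 * (M + 1)) * (M + 1) = ε / 8 := by field_simp
    have h4 : θ y - θ x₀ ≥ -M := by
      have := le_abs_self (θ x₀ - θ y)
      rw [← hMdef] at this
      linarith
    have h5 : s * (θ y - θ x₀) ≥ -(s * M) := by nlinarith
    have h7 : s * M ≤ ε / 8 := by linarith [h2, h3.le]
    linarith [h1, h5, h7]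
  -- the open set `B ⊆ P` where `θ > 1 + 7ε/8`
  set B := interior P ∩ θ ⁻¹' Set.Ioi (1 + 13 * ε / 16) with hBdef
  have hBopen : IsOpen B := isOpen_interior.inter (isOpen_Ioi.preimage hθcont)
  have hBne : B.Nonempty := ⟨z, hzint, hθz⟩
  have hBsub : B ⊆ P := Set.Subset.trans Set.inter_subset_left interior_subset
  have hBpos : 0 < volume B := hBopen.measure_pos _ hBne
  have hBfin : volume B < ⊤ := lt_of_le_of_lt (measure_mono hBsub) hPcomp.measure_lt_top
  have hBmem : ∀ x ∈ B, x ∈ interior P ∧ 1 + 13 * ε / 16 < θ x := by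
    intro x hx
    rw [hBdef] at hx
    exact ⟨hx.1, hx.2⟩
  clear_value B
  -- the test function
  set f : (Fin n → ℝ) → ℝ := fun x => max 0 (ℓ x) with hfdef
  have hfcont : Continuous f := continuous_const.max hℓcont
  have hfnonneg : ∀ x, 0 ≤ f x := fun x => by rw [hfdef]; exact le_max_left _ _
  have hfge : ∀ x, ℓ x ≤ f x := fun x => by rw [hfdef]; exact le_max_right _ _
  have hfzero : ∀ x, ℓ x ≤ 0 → f x = 0 := fun x hx => by rw [hfdef]; exact max_eq_left hx
  clear_value f
  have hgcont : Continuous fun x => f x * (1 - θ x) :=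
    hfcont.mul (continuous_const.sub hθcont)
  have hgP : IntegrableOn (fun x => f x * (1 - θ x)) P :=
    hgcont.continuousOn.integrableOn_compact hPcomp
  have hgnonpos : ∀ x ∈ P, f x * (1 - θ x) ≤ 0 := by
    intro x hx
    rcases le_or_gt (ℓ x) 0 with h | h
    · rw [hfzero x h]; simp
    · have h4 := happrox x hx
      rw [abs_le] at h4
      have hθ1 : 1 < θ x := by linarith [h4.2, hεpos]
      have hf0 : 0 ≤ f x := hfnonneg x
      nlinarith
  have hκ : ∀ x ∈ B, f x * (1 - θ x) ≤ -(ε / 16 * (13 * ε / 16)) := by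
    intro x hxB
    obtain ⟨hxi, hxθ⟩ := hBmem x hxB
    have hxP : x ∈ P := interior_subset hxi
    have h4 := happrox x hxP
    rw [abs_le] at h4
    have hθx : 1 + 13 * ε / 16 < θ x := hxθ
    have hℓx : ε / 16 ≤ ℓ x := by linarith [h4.1]
    have hfx : ε / 16 ≤ f x := le_trans hℓx (hfge x)
    have h1θ : 1 - θ x ≤ -(13 * ε / 16) := by linarith
    nlinarith
  -- integral estimates
  have hIB_le : (∫ x in B, f x * (1 - θ x)) ≤ -(ε / 16 * (13 * ε / 16)) * (volume B).toReal := by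
    have h1 : (∫ x in B, f x * (1 - θ x)) ≤ ∫ _x in B, (-(ε / 16 * (13 * ε / 16)) : ℝ) :=
      setIntegral_mono_on (hgP.mono_set hBsub) (integrableOn_const hBfin.ne)
        hBopen.measurableSet hκ
    rw [setIntegral_const, smul_eq_mul, mul_comm] at h1
    exact h1
  have hPB : (∫ x in P, f x * (1 - θ x)) ≤ ∫ x in B, f x * (1 - θ x) := by
    have hneg : (∫ x in B, -(f x * (1 - θ x))) ≤ ∫ x in P, -(f x * (1 - θ x)) := by
      refine setIntegral_mono_set hgP.neg ?_ (HasSubset.Subset.eventuallyLE hBsub)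
      exact (ae_restrict_iff' hPmeas).2 (ae_of_all _ fun x hx => by
        simpa using hgnonpos x hx)
    rw [integral_neg, integral_neg] at hneg
    linarith
  have hvolB : 0 < (volume B).toReal := ENNReal.toReal_pos hBpos.ne' hBfin.ne
  have hIneg : (∫ x in P, f x * (1 - θ x)) < 0 :=
    lt_of_le_of_lt (hPB.trans hIB_le) (by
      have hq := mul_pos (mul_pos (by linarith : (0:ℝ) < ε / 16)
        (by linarith : (0:ℝ) < 13 * ε / 16)) hvolB
      linarith)
  -- `f` is a rational PL convex function
  have hfRat : IsRatPLConvex f := by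
    refine ⟨1, fun k i => if k = 0 then 0 else b i, fun k => if k = 0 then 0 else d,
      fun x => ?_⟩
    rw [fin2_sup'_eq_max]
    have h0' : ((0 : Fin 2) = 0) = True := by simp
    have h1' : ((1 : Fin 2) = 0) = False := by simp
    simp only [h0', h1', if_true, if_false, Rat.cast_zero, zero_mul, Finset.sum_const_zero,
      add_zero, hfdef, hℓdef]
  -- conclusion
  have hDing := hss f hfRat
  have hvolP : 0 < (volume P).toReal :=
    ENNReal.toReal_pos (Measure.measure_pos_of_nonempty_interior _ hint).ne'
      hPcomp.measure_lt_top.ne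
  have hf0 : 0 ≤ f 0 := hfnonneg 0
  have hlt : DingI P θ f < 0 := by
    unfold DingI
    have h2 : (1 / (volume P).toReal) * ∫ x in P, f x * (1 - θ x) < 0 :=
      mul_neg_of_pos_of_neg (by positivity) hIneg
    linarith
  linarith
end

section
/- Let P ⊂ ℝⁿ be a compact convex polytope with nonempty interior containing the origin in its interior, with rational vertices, and let θ be its extremal affine function. If there exists δ > 0 such that I_θ(f) ≥ δ ∫_P f(x) dx for every normalized rational piecewise affine convex function f on P, then max_{x∈P} θ(x) < 1. -/
open MeasureTheory

/-!
Suppose `max_P θ = θ x₀ ≥ 1`. If `θ 0 < θ x₀`, then a rational perturbation `f` of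
`max (θ - θ x₀ + ε) 0` is a normalized rational PL convex function with `∫_P f > 0`, supported
where `1 - θ ≤ 2ε`; hence `I_θ(f) ≤ (2ε / vol P) ∫_P f`, which contradicts `I_θ(f) ≥ δ ∫_P f`
once `ε < δ vol P / 2`. Otherwise the affine `θ` attains its maximum at the interior point `0`,
so it is constant, and `∫_P θ = 0` makes it zero.
-/

namespace IsAffineFn

variable {n : ℕ} {θ : (Fin n → ℝ) → ℝ}

theorem continuous_s9 (hθ : IsAffineFn θ) : Continuous θ := by
  obtain ⟨a, c, h⟩ := hθ
  rw [funext h]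
  fun_prop

theorem add_const (hθ : IsAffineFn θ) (b : ℝ) : IsAffineFn fun x => θ x + b := by
  obtain ⟨a, c, h⟩ := hθ
  exact ⟨a, c + b, fun x => by simp only [h]; ring⟩

theorem apply_add_smul_sub (hθ : IsAffineFn θ) (x y : Fin n → ℝ) (t : ℝ) :
    θ (x + t • (y - x)) = θ x + t * (θ y - θ x) := by
  obtain ⟨a, c, h⟩ := hθ
  have hsum : ∑ i, a i * (x i + t * (y i - x i)) =
      ∑ i, a i * x i + t * (∑ i, a i * y i - ∑ i, a i * x i) := by
    rw [← Finset.sum_sub_distrib, Finset.mul_sum, ← Finset.sum_add_distrib]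
    exact Finset.sum_congr rfl fun i _ => by ring
  simp only [h, Pi.add_apply, Pi.smul_apply, Pi.sub_apply, smul_eq_mul, hsum]
  ring

theorem eq_of_isLocalMax (hθ : IsAffineFn θ) {x : Fin n → ℝ} (hx : IsLocalMax θ x)
    (y : Fin n → ℝ) : θ y = θ x := by
  have hline : IsLocalMax (fun t : ℝ => θ (x + t • (y - x))) 0 :=
    IsLocalMax.comp_continuous (by simpa using hx) (by fun_prop)
  simp only [hθ.apply_add_smul_sub] at hline
  have := hline.hasDerivAt_eq_zero (((hasDerivAt_id 0).mul_const (θ y - θ x)).const_add (θ x))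
  linarith

theorem exists_rat_near (hθ : IsAffineFn θ) {P : Set (Fin n → ℝ)} (hP : Bornology.IsBounded P)
    {ε : ℝ} (hε : 0 < ε) :
    ∃ (qa : Fin n → ℚ) (qc : ℚ), ∀ x ∈ P, |∑ i, (qa i : ℝ) * x i + qc - θ x| < ε := by
  obtain ⟨a, c, h⟩ := hθ
  obtain ⟨R, hR, hPR⟩ := hP.exists_pos_norm_le
  set η := ε / (2 * (n * R + 1))
  have hη : 0 < η := by positivity
  have hnηR : n * (η * R) ≤ ε / 2 := by
    rw [show n * (η * R) = ε / 2 * (n * R / (n * R + 1)) by simp only [η]; field_simp]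
    exact mul_le_of_le_one_right (by positivity) ((div_le_one (by positivity)).2 (by linarith))
  choose qa hqa using fun i => _root_.exists_rat_near (a i) hη
  obtain ⟨qc, hqc⟩ := _root_.exists_rat_near c (half_pos hε)
  refine ⟨qa, qc, fun x hx => ?_⟩
  have hcoef : |∑ i, ((qa i : ℝ) - a i) * x i| ≤ n * (η * R) :=
    calc |∑ i, ((qa i : ℝ) - a i) * x i| ≤ ∑ i, |(qa i : ℝ) - a i| * |x i| := by
          simpa only [abs_mul] using
            Finset.abs_sum_le_sum_abs (fun i => ((qa i : ℝ) - a i) * x i) Finset.univ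
      _ ≤ ∑ _i : Fin n, η * R := by
          gcongr with i
          · rw [abs_sub_comm]; exact (hqa i).le
          · exact (norm_le_pi_norm x i).trans (hPR x hx)
      _ = n * (η * R) := by simp
  have hsplit :
      ∑ i, (qa i : ℝ) * x i + qc - θ x = ∑ i, ((qa i : ℝ) - a i) * x i + (qc - c) := by
    simp only [h, sub_mul, Finset.sum_sub_distrib]; ring
  rw [hsplit]
  calc _ ≤ |∑ i, ((qa i : ℝ) - a i) * x i| + |(qc : ℝ) - c| := abs_add_le _ _
    _ < ε / 2 + ε / 2 := by rw [abs_sub_comm] at hqc; linarith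
    _ = ε := add_halves ε

end IsAffineFn

theorem isRatPLConvex_max_zero {n : ℕ} (qa : Fin n → ℚ) (qc : ℚ) :
    IsRatPLConvex fun x => max (∑ i, (qa i : ℝ) * x i + qc) 0 :=
  ⟨1, ![qa, 0], ![qc, 0], fun x => by simp [Fin.univ_succ]⟩

theorem setIntegral_pos_of_exists_pos_interior {X : Type*} [TopologicalSpace X] [T2Space X]
    [MeasurableSpace X] [OpensMeasurableSpace X] {μ : Measure X} [μ.IsOpenPosMeasure]
    [IsFiniteMeasureOnCompacts μ] {K : Set X} (hK : IsCompact K) {f : X → ℝ}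
    (hf : Continuous f) (hf0 : ∀ x ∈ K, 0 ≤ f x) (hpos : (interior K ∩ {x | 0 < f x}).Nonempty) :
    0 < ∫ x in K, f x ∂μ := by
  rw [setIntegral_pos_iff_support_of_nonneg_ae (ae_restrict_of_forall_mem hK.measurableSet hf0)
    (hf.continuousOn.integrableOn_compact hK)]
  exact ((isOpen_interior.inter (isOpen_lt continuous_const hf)).measure_pos μ hpos).trans_le
    (measure_mono fun x hx => ⟨hx.2.ne', interior_subset hx.1⟩)

theorem dingI_le_of_one_sub_le {n : ℕ} {P : Set (Fin n → ℝ)} (hP : IsCompact P)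
    {θ f : (Fin n → ℝ) → ℝ} (hθ : Continuous θ) (hf : Continuous f) (hf0 : f 0 = 0)
    (hfP : ∀ x ∈ P, 0 ≤ f x) {κ : ℝ} (hκ : ∀ x ∈ P, 0 < f x → 1 - θ x ≤ κ) :
    DingI P θ f ≤ κ / (volume P).toReal * ∫ x in P, f x := by
  have hpt : ∀ x ∈ P, f x * (1 - θ x) ≤ f x * κ := fun x hx => by
    rcases (hfP x hx).eq_or_lt with h | h
    · simp [← h]
    · exact mul_le_mul_of_nonneg_left (hκ x hx h) h.le
  calc DingI P θ f = 1 / (volume P).toReal * ∫ x in P, f x * (1 - θ x) := by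
        simp [DingI, hf0]
    _ ≤ 1 / (volume P).toReal * ∫ x in P, f x * κ := by
        refine mul_le_mul_of_nonneg_left ?_ (by positivity)
        exact setIntegral_mono_on
          ((hf.mul (continuous_const.sub hθ)).continuousOn.integrableOn_compact (μ := volume) hP)
          ((hf.mul continuous_const).continuousOn.integrableOn_compact hP) hP.measurableSet hpt
    _ = κ / (volume P).toReal * ∫ x in P, f x := by rw [integral_mul_const]; ring

theorem IsAffineFn.exists_ratPLConvex_pos_only_near_max {n : ℕ} {θ : (Fin n → ℝ) → ℝ}
    (hθ : IsAffineFn θ) {P : Set (Fin n → ℝ)} (hPb : Bornology.IsBounded P) (hPc : Convex ℝ P)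
    (h0 : (0 : Fin n → ℝ) ∈ interior P) {x₀ : Fin n → ℝ} (hx₀ : x₀ ∈ P) (hlt : θ 0 < θ x₀)
    {η : ℝ} (hη : 0 < η) :
    ∃ f, IsRatPLConvex f ∧ Continuous f ∧ IsNormalized P f ∧
      (interior P ∩ {x | 0 < f x}).Nonempty ∧ ∀ x ∈ P, 0 < f x → θ x₀ - η < θ x := by
  obtain ⟨ε, hε, hεη, hεθ⟩ : ∃ ε > 0, ε ≤ η / 2 ∧ ε ≤ (θ x₀ - θ 0) / 2 :=
    ⟨min η (θ x₀ - θ 0) / 2, by positivity, by gcongr; exact min_le_left _ _,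
      by gcongr; exact min_le_right _ _⟩
  -- `f` is a rational approximation of `max (θ - θ x₀ + ε) 0`
  obtain ⟨qa, qc, hq⟩ := (hθ.add_const (ε - θ x₀)).exists_rat_near hPb (half_pos hε)
  refine ⟨fun x => max (∑ i, (qa i : ℝ) * x i + qc) 0, isRatPLConvex_max_zero qa qc,
    by fun_prop, ⟨?_, fun x _ => le_max_right _ _⟩, ?_, fun x hx hfx => ?_⟩
  · have := (abs_lt.1 (hq 0 (interior_subset h0))).2
    exact max_eq_right (by linarith)
  · have hx₀cl : x₀ ∈ closure (interior P) := by
      rw [hPc.closure_interior_eq_closure_of_nonempty_interior ⟨0, h0⟩]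
      exact subset_closure hx₀
    have := (abs_lt.1 (hq x₀ hx₀)).1
    obtain ⟨y, hy, hyP⟩ := mem_closure_iff.1 hx₀cl {x | 0 < ∑ i, (qa i : ℝ) * x i + qc}
      (isOpen_lt continuous_const (by fun_prop))
      (show 0 < ∑ i, (qa i : ℝ) * x₀ i + qc by linarith)
    exact ⟨y, hyP, lt_max_of_lt_left (Set.mem_ofPred.1 hy)⟩
  · have := (abs_lt.1 (hq x hx)).2
    have := (lt_max_iff.1 hfx).resolve_right (lt_irrefl 0)
    linarith

/-- If there is `δ > 0` with `I_θ(f) ≥ δ ∫_P f` for every normalized rational piecewise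
affine convex `f` on `P` (a rational polytope with the origin in its interior), then
`max_P θ < 1`. -/
theorem uniform_stability_implies_max_lt_one {n : ℕ} (P : Set (Fin n → ℝ))
    (hP : ∃ V : Finset (Fin n → ℚ),
      P = convexHull ℝ ((fun v : Fin n → ℚ => fun i => (v i : ℝ)) '' ↑V))
    (hint : (0 : Fin n → ℝ) ∈ interior P)
    (θ : (Fin n → ℝ) → ℝ) (hθ : IsExtremalAffine P θ)
    (hδ : ∃ δ > (0 : ℝ), ∀ f : (Fin n → ℝ) → ℝ, IsRatPLConvex f → IsNormalized P f →
      δ * (∫ x in P, f x) ≤ DingI P θ f) :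
    ∃ M : ℝ, IsGreatest (θ '' P) M ∧ M < 1 := by
  obtain ⟨V, hPV⟩ := hP
  obtain ⟨hθaff, hθint, -⟩ := hθ
  have hPc : IsCompact P := hPV ▸ (V.finite_toSet.image _).isCompact_convexHull (𝕜 := ℝ)
  have hvol : 0 < (volume P).toReal := ENNReal.toReal_pos
    ((isOpen_interior.measure_pos volume ⟨0, hint⟩).trans_le (measure_mono interior_subset)).ne'
    hPc.measure_lt_top.ne
  obtain ⟨x₀, hx₀, hmax⟩ :=
    hPc.exists_isMaxOn ⟨0, interior_subset hint⟩ hθaff.continuous_s9.continuousOn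
  refine ⟨θ x₀, ⟨Set.mem_image_of_mem θ hx₀, Set.forall_mem_image.2 fun x hx => hmax hx⟩, ?_⟩
  rcases le_or_gt (θ x₀) (θ 0) with hle | hlt
  · have hmax0 : IsMaxOn θ P 0 := fun x hx => (hmax hx).trans hle
    have hconst := hθaff.eq_of_isLocalMax (hmax0.isLocalMax (mem_interior_iff_mem_nhds.1 hint))
    rw [funext hconst, setIntegral_const, smul_eq_mul] at hθint
    have hθ0 : θ 0 = 0 := (mul_eq_zero.1 hθint).resolve_left hvol.ne'
    rw [hconst x₀, hθ0]
    exact one_pos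
  · by_contra! hM
    obtain ⟨δ, hδ, hstab⟩ := hδ
    obtain ⟨f, hfrat, hfc, hfnorm, hfpos, hfθ⟩ := hθaff.exists_ratPLConvex_pos_only_near_max
      hPc.isBounded (hPV ▸ convex_convexHull ℝ _) hint hx₀ hlt (η := δ * (volume P).toReal / 2)
      (by positivity)
    have hding := dingI_le_of_one_sub_le hPc hθaff.continuous_s9 hfc hfnorm.1 hfnorm.2
      (κ := δ * (volume P).toReal / 2) fun x hx hfx => by linarith [hfθ x hx hfx]
    rw [show δ * (volume P).toReal / 2 / (volume P).toReal = δ / 2 by field_simp] at hding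
    have hfint := setIntegral_pos_of_exists_pos_interior (μ := volume) hPc hfc hfnorm.2 hfpos
    nlinarith [hstab f hfrat hfnorm]
end

section
/- Let P ⊂ ℝⁿ be a compact convex polytope with nonempty interior and let f : P → ℝ be a continuous convex function. Define the reduced J-norm ||f||_J := inf_ℓ ( (1/vol(P)) ∫_P (f(x) + ℓ(x)) dx − min_P (f + ℓ) ), where ℓ runs over all affine functions on ℝⁿ. Then ||f||_J = 0 if and only if f is the restriction to P of an affine function. -/
open MeasureTheory

/-- The reduced J-norm of `f` on `P`:
`inf_ℓ ((1/vol P) ∫_P (f + ℓ) - min_P (f + ℓ))` over affine functions `ℓ`. -/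
noncomputable def Jnorm {n : ℕ} (P : Set (Fin n → ℝ)) (f : (Fin n → ℝ) → ℝ) : ℝ :=
  sInf { t : ℝ | ∃ ℓ : (Fin n → ℝ) → ℝ, IsAffineFn ℓ ∧
    t = (1 / (volume P).toReal) * (∫ x in P, (f x + ℓ x))
          - sInf ((fun x => f x + ℓ x) '' P) }

/-! ### Auxiliary material -/

/-- The affine function with coefficients `p.1` and constant `p.2`. -/
def affFun {n : ℕ} (p : (Fin n → ℝ) × ℝ) : (Fin n → ℝ) → ℝ :=
  fun x => (∑ i, p.1 i * x i) + p.2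

lemma affFun_continuous {n : ℕ} (p : (Fin n → ℝ) × ℝ) : Continuous (affFun p) := by
  exact (continuous_finset_sum _ fun i _ => continuous_const.mul (continuous_apply i)).add
    continuous_const

lemma affFun_memℒp {n : ℕ} {P : Set (Fin n → ℝ)} (hPc : IsCompact P) (p : (Fin n → ℝ) × ℝ) :
    MemLp (affFun p) 1 (volume.restrict P) :=
  memLp_one_iff_integrable.mpr
    ((affFun_continuous p).continuousOn.integrableOn_compact hPc)

lemma affFun_add {n : ℕ} (p q : (Fin n → ℝ) × ℝ) :
    affFun (p + q) = affFun p + affFun q := by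
  funext x
  simp only [affFun, Prod.fst_add, Prod.snd_add, Pi.add_apply, add_mul,
    Finset.sum_add_distrib]
  ring

lemma affFun_smul {n : ℕ} (r : ℝ) (p : (Fin n → ℝ) × ℝ) :
    affFun (r • p) = r • affFun p := by
  funext x
  simp only [affFun, Prod.smul_fst, Prod.smul_snd, Pi.smul_apply, smul_eq_mul,
    Finset.mul_sum, mul_add]
  ring

/-- The linear map sending affine coefficients to the corresponding element of `L¹(P)`. -/
noncomputable def affLp {n : ℕ} {P : Set (Fin n → ℝ)} (hPc : IsCompact P) :
    ((Fin n → ℝ) × ℝ) →ₗ[ℝ] Lp ℝ 1 (volume.restrict P) where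
  toFun p := (affFun_memℒp hPc p).toLp (affFun p)
  map_add' p q := by
    simp only [affFun_add]
    exact MemLp.toLp_add (affFun_memℒp hPc p) (affFun_memℒp hPc q)
  map_smul' r p := by
    have h1 : (affFun_memℒp hPc (r • p)).toLp (affFun (r • p))
        = ((affFun_memℒp hPc p).const_smul r).toLp (r • affFun p) :=
      MemLp.toLp_congr _ _ (by rw [affFun_smul])
    simp only [RingHom.id_apply]
    rw [h1]
    exact MemLp.toLp_const_smul r (affFun_memℒp hPc p)

lemma affLp_coeFn {n : ℕ} {P : Set (Fin n → ℝ)} (hPc : IsCompact P) (p : (Fin n → ℝ) × ℝ) :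
    (affLp hPc p : (Fin n → ℝ) → ℝ) =ᵐ[volume.restrict P] affFun p :=
  MemLp.coeFn_toLp (affFun_memℒp hPc p)

/-- The reduced J-norm of a continuous convex function `f` on `P` vanishes if and only if
`f` is the restriction to `P` of an affine function. -/
theorem Jnorm_eq_zero_iff_affine {n : ℕ} (P : Set (Fin n → ℝ))
    (hP : IsPolytope P) (hint : (interior P).Nonempty)
    (f : (Fin n → ℝ) → ℝ) (hfc : ContinuousOn f P) (hfconv : ConvexOn ℝ P f) :
    Jnorm P f = 0 ↔ ∃ g : (Fin n → ℝ) → ℝ, IsAffineFn g ∧ ∀ x ∈ P, f x = g x := by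
  classical
  obtain ⟨Vfin, hPV⟩ := hP
  have hPc : IsCompact P := by
    rw [hPV]; exact Vfin.finite_toSet.isCompact_convexHull ℝ
  have hPconv : Convex ℝ P := by rw [hPV]; exact convex_convexHull ℝ _
  have hPmeas : MeasurableSet P := hPc.isClosed.measurableSet
  have hPne : P.Nonempty := hint.mono interior_subset
  have hvolpos : 0 < volume P := Measure.measure_pos_of_nonempty_interior _ hint
  have hvolfin : volume P < ⊤ := hPc.measure_lt_top
  set vol : ℝ := (volume P).toReal with hvoldef
  have hvolpos' : 0 < vol := ENNReal.toReal_pos hvolpos.ne' hvolfin.ne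
  set μ : Measure (Fin n → ℝ) := volume.restrict P with hμdef
  have hfint : Integrable f μ := hfc.integrableOn_compact hPc
  have hfmem : MemLp f 1 μ := memLp_one_iff_integrable.mpr hfint
  set S : Set ℝ := { t : ℝ | ∃ ℓ : (Fin n → ℝ) → ℝ, IsAffineFn ℓ ∧
    t = (1 / (volume P).toReal) * (∫ x in P, (f x + ℓ x))
          - sInf ((fun x => f x + ℓ x) '' P) } with hSdef
  have hJ : Jnorm P f = sInf S := rfl
  -- every element of S is nonnegative
  have hS_nonneg : ∀ t ∈ S, 0 ≤ t := by
    rintro t ⟨ℓ, hℓaff, rfl⟩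
    obtain ⟨a, c, hℓ⟩ := hℓaff
    have hℓc : Continuous ℓ := by
      have : ℓ = affFun (a, c) := funext hℓ
      rw [this]; exact affFun_continuous _
    set g : (Fin n → ℝ) → ℝ := fun x => f x + ℓ x with hgdef
    have hgc : ContinuousOn g P := hfc.add hℓc.continuousOn
    have hgint : Integrable g μ := hgc.integrableOn_compact hPc
    obtain ⟨x₀, hx₀, hmin⟩ := hPc.exists_isMinOn hPne hgc
    have hsInf : sInf (g '' P) = g x₀ := by
      refine IsLeast.csInf_eq ⟨⟨x₀, hx₀, rfl⟩, ?_⟩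
      rintro _ ⟨y, hy, rfl⟩
      exact hmin hy
    rw [hsInf]
    have hub : g x₀ * vol ≤ ∫ x in P, g x := by
      have := setIntegral_mono_on (integrableOn_const hvolfin.ne) hgint hPmeas
        (fun x hx => hmin hx)
      rwa [setIntegral_const, smul_eq_mul, mul_comm] at this
    have h1 : g x₀ ≤ (∫ x in P, g x) / vol := (le_div_iff₀ hvolpos').mpr hub
    have h2 : (1 / vol) * (∫ x in P, g x) = (∫ x in P, g x) / vol := by ring
    linarith
  -- S is nonempty
  have hS_ne : S.Nonempty :=
    ⟨_, ⟨fun _ => 0, ⟨0, 0, by simp⟩, rfl⟩⟩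
  constructor
  · -- hard direction
    intro hJ0
    rw [hJ] at hJ0
    set V : Submodule ℝ (Lp ℝ 1 μ) := LinearMap.range (affLp hPc) with hVdef
    have hVfd : FiniteDimensional ℝ V := LinearMap.finiteDimensional_range _
    have hVclosed : IsClosed (V : Set (Lp ℝ 1 μ)) := Submodule.closed_of_finiteDimensional V
    set fL : Lp ℝ 1 μ := hfmem.toLp f with hfLdef
    -- key estimate : infDist fL V ≤ vol * t for every t ∈ S
    have hkey : ∀ t ∈ S, Metric.infDist fL (V : Set (Lp ℝ 1 μ)) ≤ vol * t := by
      rintro t ⟨ℓ, hℓaff, rfl⟩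
      obtain ⟨a, c, hℓ⟩ := hℓaff
      have hℓc : Continuous ℓ := by
        have : ℓ = affFun (a, c) := funext hℓ
        rw [this]; exact affFun_continuous _
      set g : (Fin n → ℝ) → ℝ := fun x => f x + ℓ x with hgdef
      have hgc : ContinuousOn g P := hfc.add hℓc.continuousOn
      have hgint : Integrable g μ := hgc.integrableOn_compact hPc
      obtain ⟨x₀, hx₀, hmin⟩ := hPc.exists_isMinOn hPne hgc
      set m : ℝ := g x₀ with hmdef
      have hsInf : sInf (g '' P) = m := by
        refine IsLeast.csInf_eq ⟨⟨x₀, hx₀, rfl⟩, ?_⟩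
        rintro _ ⟨y, hy, rfl⟩
        exact hmin hy
      set v : Lp ℝ 1 μ := affLp hPc (-a, m - c) with hvdef
      have hvV : v ∈ (V : Set (Lp ℝ 1 μ)) := ⟨(-a, m - c), rfl⟩
      have hnorm : ‖fL - v‖ = ∫ x in P, (g x - m) := by
        rw [L1.norm_eq_integral_norm]
        have hcoe : (fun x => ‖(fL - v : Lp ℝ 1 μ) x‖) =ᵐ[μ] fun x => (g x - m) := by
          filter_upwards [Lp.coeFn_sub fL v, hfmem.coeFn_toLp, affLp_coeFn hPc (-a, m - c),
            ae_restrict_mem hPmeas] with x h1 h2 h3 hxP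
          rw [h1, Pi.sub_apply, h2, h3]
          have hval : f x - affFun (-a, m - c) x = g x - m := by
            simp only [affFun, hgdef, hℓ x, Pi.neg_apply, neg_mul, Finset.sum_neg_distrib]
            ring
          rw [hval, Real.norm_eq_abs, abs_of_nonneg (sub_nonneg.mpr (hmin hxP))]
        exact integral_congr_ae hcoe
      have hint_sub : ∫ x in P, (g x - m) = (∫ x in P, g x) - vol * m := by
        rw [integral_sub hgint (integrableOn_const hvolfin.ne),
          setIntegral_const, smul_eq_mul]; rfl
      have hdist : Metric.infDist fL (V : Set (Lp ℝ 1 μ)) ≤ ‖fL - v‖ := by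
        simpa [dist_eq_norm] using Metric.infDist_le_dist_of_mem hvV
      rw [hsInf]
      calc Metric.infDist fL (V : Set (Lp ℝ 1 μ)) ≤ ‖fL - v‖ := hdist
        _ = (∫ x in P, g x) - vol * m := by rw [hnorm, hint_sub]
        _ = vol * ((1 / vol) * (∫ x in P, g x) - m) := by field_simp
    -- conclude infDist = 0
    have hD0 : Metric.infDist fL (V : Set (Lp ℝ 1 μ)) = 0 := by
      have hle : Metric.infDist fL (V : Set (Lp ℝ 1 μ)) / vol ≤ sInf S := by
        refine le_csInf hS_ne fun t ht => ?_
        rw [div_le_iff₀ hvolpos']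
        calc Metric.infDist fL (V : Set (Lp ℝ 1 μ)) ≤ vol * t := hkey t ht
          _ = t * vol := mul_comm _ _
      rw [hJ0] at hle
      have := (div_nonpos_iff.mp hle)
      rcases this with ⟨h1, h2⟩ | ⟨h1, h2⟩
      · linarith
      · exact le_antisymm h1 Metric.infDist_nonneg
    have hmem : fL ∈ V := by
      have := (hVclosed.mem_iff_infDist_zero ⟨0, V.zero_mem⟩).mpr hD0
      exact this
    obtain ⟨p, hp⟩ := hmem
    -- f agrees a.e. on P with the affine function `affFun p`
    have hae : ∀ᵐ x ∂μ, f x = affFun p x := by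
      have h1 : (affLp hPc p : (Fin n → ℝ) → ℝ) =ᵐ[μ] affFun p := affLp_coeFn hPc p
      have h2 : (affLp hPc p : (Fin n → ℝ) → ℝ) =ᵐ[μ] f := by
        rw [hp]; exact hfmem.coeFn_toLp
      filter_upwards [h1, h2] with x hx1 hx2
      rw [← hx1, hx2]
    set g : (Fin n → ℝ) → ℝ := affFun p with hgdef
    have hgcont : Continuous g := affFun_continuous p
    -- f = g on the interior of P
    have hint_eq : ∀ z ∈ interior P, f z = g z := by
      intro z hz
      by_contra hne
      have hfz : ContinuousAt f z :=
        (hfc.mono interior_subset).continuousAt (isOpen_interior.mem_nhds hz)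
      have hsub : ContinuousAt (fun x => f x - g x) z := hfz.sub hgcont.continuousAt
      have hne' : f z - g z ≠ 0 := sub_ne_zero.mpr hne
      have hev : {x | f x - g x ≠ 0} ∈ nhds z := by
        have : {t : ℝ | t ≠ 0} ∈ nhds (f z - g z) :=
          isOpen_compl_singleton.mem_nhds hne'
        exact hsub this
      obtain ⟨U, hUsub, hUopen, hzU⟩ :=
        mem_nhds_iff.mp (Filter.inter_mem hev (isOpen_interior.mem_nhds hz))
      have hU0 : μ U = 0 := by
        have hμne : μ {x | ¬ f x = affFun p x} = 0 := hae
        refine le_antisymm ?_ (by positivity)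
        calc μ U ≤ μ {x | ¬ f x = affFun p x} := by
              refine measure_mono fun x hx => ?_
              have := (hUsub hx).1
              exact fun hfg => this (by simpa [hgdef] using sub_eq_zero.mpr hfg)
          _ = 0 := hμne
      have hUP : U ⊆ P := fun x hx => interior_subset (hUsub hx).2
      have : μ U = volume U := by
        rw [hμdef, Measure.restrict_apply hUopen.measurableSet,
          Set.inter_eq_self_of_subset_left hUP]
      rw [this] at hU0
      exact (hUopen.measure_pos volume ⟨z, hzU⟩).ne' hU0
    -- extend to all of P by continuity
    refine ⟨g, ⟨p.1, p.2, fun x => rfl⟩, ?_⟩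
    intro x hx
    obtain ⟨y, hy⟩ := hint
    set seq : ℕ → (Fin n → ℝ) := fun k =>
      (1 - 1 / (k + 1 : ℝ)) • x + (1 / (k + 1 : ℝ)) • y with hseqdef
    have hseqmem : ∀ k, seq k ∈ interior P := by
      intro k
      refine hPconv.combo_self_interior_mem_interior hx hy ?_ ?_ (by ring)
      · have : 1 / (k + 1 : ℝ) ≤ 1 := by
          rw [div_le_one (by positivity)]; linarith [Nat.cast_nonneg (α := ℝ) k]
        linarith
      · positivity
    have htend0 : Filter.Tendsto (fun k : ℕ => 1 / (k + 1 : ℝ)) Filter.atTop (nhds 0) :=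
      tendsto_one_div_add_atTop_nhds_zero_nat
    have htend : Filter.Tendsto seq Filter.atTop (nhds x) := by
      have h1 : Filter.Tendsto (fun k : ℕ => (1 - 1 / (k + 1 : ℝ)) • x)
          Filter.atTop (nhds ((1 : ℝ) • x)) := by
        refine Filter.Tendsto.smul_const ?_ x
        simpa using (tendsto_const_nhds.sub htend0)
      have h2 : Filter.Tendsto (fun k : ℕ => (1 / (k + 1 : ℝ)) • y)
          Filter.atTop (nhds ((0 : ℝ) • y)) := htend0.smul_const y
      have := h1.add h2
      simp only [one_smul, zero_smul, add_zero] at this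
      exact this
    have htendP : Filter.Tendsto seq Filter.atTop (nhdsWithin x P) := by
      rw [tendsto_nhdsWithin_iff]
      exact ⟨htend, Filter.Eventually.of_forall fun k => interior_subset (hseqmem k)⟩
    have hft : Filter.Tendsto (fun k => f (seq k)) Filter.atTop (nhds (f x)) :=
      (hfc x hx).tendsto.comp htendP
    have hgt : Filter.Tendsto (fun k => g (seq k)) Filter.atTop (nhds (g x)) :=
      (hgcont.tendsto x).comp htend
    have heq : (fun k => f (seq k)) = fun k => g (seq k) :=
      funext fun k => hint_eq _ (hseqmem k)
    rw [heq] at hft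
    exact tendsto_nhds_unique hft hgt
  · -- easy direction
    rintro ⟨g, ⟨a, c, hg⟩, hfg⟩
    set ℓ : (Fin n → ℝ) → ℝ := fun x => -g x with hℓdef
    have hℓaff : IsAffineFn ℓ := by
      refine ⟨fun i => -a i, -c, fun x => ?_⟩
      simp [hℓdef, hg x, Finset.sum_neg_distrib]
      ring
    have hzero : ∀ x ∈ P, f x + ℓ x = 0 := by
      intro x hx
      simp [hℓdef, hfg x hx]
    have hintzero : (∫ x in P, (f x + ℓ x)) = 0 := by
      rw [setIntegral_congr_fun hPmeas hzero, integral_zero]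
    have himg : (fun x => f x + ℓ x) '' P = {0} := by
      apply Set.eq_singleton_iff_nonempty_unique_mem.mpr
      constructor
      · exact ⟨_, hPne.choose, hPne.choose_spec, hzero _ hPne.choose_spec⟩
      · rintro _ ⟨y, hy, rfl⟩; exact hzero y hy
    have h0mem : (0 : ℝ) ∈ S := by
      refine ⟨ℓ, hℓaff, ?_⟩
      rw [hintzero, himg, csInf_singleton]
      ring
    rw [hJ]
    exact le_antisymm (csInf_le ⟨0, fun t ht => hS_nonneg t ht⟩ h0mem) (le_csInf hS_ne hS_nonneg)
end

section
/- Let D_6 ⊂ ℝ⁴ be the convex hull of the 12 points (−1,−1,−1,−1), (−1,−1,−1,1), (−1,−1,0,−1), (−1,−1,2,1), (−1,1,−1,−1), (−1,1,0,−1), (−1,3,−1,1), (−1,3,2,1), (1,−1,−1,−1), (1,−1,0,−1), (3,−1,−1,1), (3,−1,2,1). Then the extremal affine function of D_6 is θ(x) = (2790 x_4 − 972)/1973; that is, this affine function satisfies ∫_{D_6} θ(x) dx = 0 and ∫_{D_6} x_i θ(x) dx = ∫_{D_6} x_i dx for i = 1, 2, 3, 4. -/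
open MeasureTheory

/-- The Fano polytope `D₆ ⊆ ℝ⁴` of the toric Fano fourfold `ℙ_{ℙ¹×ℙ²}(𝒪 ⊕ 𝒪(1,1))`:
the convex hull of the 12 listed vertices. -/
noncomputable def D6 : Set (Fin 4 → ℝ) :=
  convexHull ℝ
    ({![-1, -1, -1, -1], ![-1, -1, -1, 1], ![-1, -1, 0, -1], ![-1, -1, 2, 1],
       ![-1, 1, -1, -1], ![-1, 1, 0, -1], ![-1, 3, -1, 1], ![-1, 3, 2, 1],
       ![1, -1, -1, -1], ![1, -1, 0, -1], ![3, -1, -1, 1], ![3, -1, 2, 1]} :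
      Set (Fin 4 → ℝ))

def S : Set (Fin 4 → ℝ) :=
  {x | (-1 ≤ x 3 ∧ x 3 ≤ 1) ∧ (-1 ≤ x 2 ∧ x 2 ≤ 1 + x 3) ∧
       (-1 ≤ x 0 ∧ x 0 ≤ 2 + x 3) ∧ (-1 ≤ x 1 ∧ x 1 ≤ 1 + x 3 - x 0)}

lemma mem_S (x : Fin 4 → ℝ) : x ∈ S ↔
    (-1 ≤ x 3 ∧ x 3 ≤ 1) ∧ (-1 ≤ x 2 ∧ x 2 ≤ 1 + x 3) ∧
    (-1 ≤ x 0 ∧ x 0 ≤ 2 + x 3) ∧ (-1 ≤ x 1 ∧ x 1 ≤ 1 + x 3 - x 0) := Iff.rfl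

lemma convex_S : Convex ℝ S := by
  intro x hx y hy p q hp hq hpq
  rw [mem_S] at hx hy ⊢
  obtain ⟨⟨a1,a2⟩,⟨a3,a4⟩,⟨a5,a6⟩,⟨a7,a8⟩⟩ := hx
  obtain ⟨⟨b1,b2⟩,⟨b3,b4⟩,⟨b5,b6⟩,⟨b7,b8⟩⟩ := hy
  have e : ∀ i : Fin 4, (p • x + q • y) i = p * x i + q * y i := fun i => rfl
  simp only [e]
  refine ⟨⟨?_,?_⟩,⟨?_,?_⟩,⟨?_,?_⟩,⟨?_,?_⟩⟩
  · nlinarith [mul_le_mul_of_nonneg_left a1 hp, mul_le_mul_of_nonneg_left b1 hq]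
  · nlinarith [mul_le_mul_of_nonneg_left a2 hp, mul_le_mul_of_nonneg_left b2 hq]
  · nlinarith [mul_le_mul_of_nonneg_left a3 hp, mul_le_mul_of_nonneg_left b3 hq]
  · nlinarith [mul_le_mul_of_nonneg_left a4 hp, mul_le_mul_of_nonneg_left b4 hq]
  · nlinarith [mul_le_mul_of_nonneg_left a5 hp, mul_le_mul_of_nonneg_left b5 hq]
  · nlinarith [mul_le_mul_of_nonneg_left a6 hp, mul_le_mul_of_nonneg_left b6 hq]
  · nlinarith [mul_le_mul_of_nonneg_left a7 hp, mul_le_mul_of_nonneg_left b7 hq]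
  · nlinarith [mul_le_mul_of_nonneg_left a8 hp, mul_le_mul_of_nonneg_left b8 hq]

lemma D6_subset_S : D6 ⊆ S := by
  apply convexHull_min _ convex_S
  intro p hp
  simp only [Set.mem_insert_iff, Set.mem_singleton_iff] at hp
  rcases hp with h|h|h|h|h|h|h|h|h|h|h|h <;> subst h <;> rw [mem_S] <;>
    norm_num [Matrix.cons_val_zero, Matrix.cons_val_one, Matrix.head_cons, Matrix.cons_val_two, Matrix.cons_val_three, Matrix.tail_cons]

def zV : Fin 12 → (Fin 4 → ℝ) :=
  ![![-1, -1, -1, -1], ![-1, -1, -1, 1], ![-1, -1, 0, -1], ![-1, -1, 2, 1],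
    ![-1, 1, -1, -1], ![-1, 1, 0, -1], ![-1, 3, -1, 1], ![-1, 3, 2, 1],
    ![1, -1, -1, -1], ![1, -1, 0, -1], ![3, -1, -1, 1], ![3, -1, 2, 1]]

def nV (a b u t : ℝ) : Fin 12 → ℝ :=
  ![(1+t-a-b) * ((1+t-u) * (1-t)), (1+t-a-b) * ((1+t-u) * (1+t)),
    (1+t-a-b) * ((1+u) * (1-t)), (1+t-a-b) * ((1+u) * (1+t)),
    (b+1) * ((1+t-u) * (1-t)), (b+1) * ((1+u) * (1-t)),
    (b+1) * ((1+t-u) * (1+t)), (b+1) * ((1+u) * (1+t)),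
    (a+1) * ((1+t-u) * (1-t)), (a+1) * ((1+u) * (1-t)),
    (a+1) * ((1+t-u) * (1+t)), (a+1) * ((1+u) * (1+t))]

lemma sum_nV (a b u t : ℝ) : ∑ i, nV a b u t i = ((3+t)*((2+t)*2)) := by
  simp only [nV, Fin.sum_univ_succ, Fin.sum_univ_zero, Matrix.cons_val_zero,
    Matrix.cons_val_one, Matrix.head_cons, Matrix.cons_val_succ, Matrix.cons_val_two,
    Matrix.cons_val_three, Matrix.tail_cons]
  ring

lemma sum_nz0 (a b u t : ℝ) : ∑ i, nV a b u t i * zV i 0 = ((3+t)*((2+t)*2)) * a := by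
  simp only [nV, zV, Fin.sum_univ_succ, Fin.sum_univ_zero, Matrix.cons_val_zero,
    Matrix.cons_val_one, Matrix.head_cons, Matrix.cons_val_succ, Matrix.cons_val_two,
    Matrix.cons_val_three, Matrix.tail_cons]
  ring

lemma sum_nz1 (a b u t : ℝ) : ∑ i, nV a b u t i * zV i 1 = ((3+t)*((2+t)*2)) * b := by
  simp only [nV, zV, Fin.sum_univ_succ, Fin.sum_univ_zero, Matrix.cons_val_zero,
    Matrix.cons_val_one, Matrix.head_cons, Matrix.cons_val_succ, Matrix.cons_val_two,
    Matrix.cons_val_three, Matrix.tail_cons]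
  ring

lemma sum_nz2 (a b u t : ℝ) : ∑ i, nV a b u t i * zV i 2 = ((3+t)*((2+t)*2)) * u := by
  simp only [nV, zV, Fin.sum_univ_succ, Fin.sum_univ_zero, Matrix.cons_val_zero,
    Matrix.cons_val_one, Matrix.head_cons, Matrix.cons_val_succ, Matrix.cons_val_two,
    Matrix.cons_val_three, Matrix.tail_cons]
  ring

lemma sum_nz3 (a b u t : ℝ) : ∑ i, nV a b u t i * zV i 3 = ((3+t)*((2+t)*2)) * t := by
  simp only [nV, zV, Fin.sum_univ_succ, Fin.sum_univ_zero, Matrix.cons_val_zero,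
    Matrix.cons_val_one, Matrix.head_cons, Matrix.cons_val_succ, Matrix.cons_val_two,
    Matrix.cons_val_three, Matrix.tail_cons]
  ring

lemma nV_nonneg (a b u t : ℝ) (h1 : -1 ≤ t) (h2 : t ≤ 1) (h3 : -1 ≤ u) (h4 : u ≤ 1 + t)
    (h5 : -1 ≤ a) (h7 : -1 ≤ b) (h8 : b ≤ 1 + t - a) :
    ∀ i : Fin 12, 0 ≤ nV a b u t i := by
  intro i
  fin_cases i <;>
    simp only [nV, Matrix.cons_val_zero, Matrix.cons_val_one, Matrix.head_cons,
      Matrix.cons_val_succ] <;>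
    exact mul_nonneg (by linarith) (mul_nonneg (by linarith) (by linarith))

lemma zV_mem : ∀ i : Fin 12, zV i ∈
    ({![-1, -1, -1, -1], ![-1, -1, -1, 1], ![-1, -1, 0, -1], ![-1, -1, 2, 1],
      ![-1, 1, -1, -1], ![-1, 1, 0, -1], ![-1, 3, -1, 1], ![-1, 3, 2, 1],
      ![1, -1, -1, -1], ![1, -1, 0, -1], ![3, -1, -1, 1], ![3, -1, 2, 1]} :
      Set (Fin 4 → ℝ)) := by
  intro i
  fin_cases i
  · exact Set.mem_insert _ _
  · exact Set.mem_insert_of_mem _ (Set.mem_insert _ _)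
  · exact Set.mem_insert_of_mem _ (Set.mem_insert_of_mem _ (Set.mem_insert _ _))
  · exact Set.mem_insert_of_mem _ (Set.mem_insert_of_mem _ (Set.mem_insert_of_mem _
      (Set.mem_insert _ _)))
  · exact Set.mem_insert_of_mem _ (Set.mem_insert_of_mem _ (Set.mem_insert_of_mem _
      (Set.mem_insert_of_mem _ (Set.mem_insert _ _))))
  · exact Set.mem_insert_of_mem _ (Set.mem_insert_of_mem _ (Set.mem_insert_of_mem _
      (Set.mem_insert_of_mem _ (Set.mem_insert_of_mem _ (Set.mem_insert _ _)))))
  · exact Set.mem_insert_of_mem _ (Set.mem_insert_of_mem _ (Set.mem_insert_of_mem _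
      (Set.mem_insert_of_mem _ (Set.mem_insert_of_mem _ (Set.mem_insert_of_mem _
      (Set.mem_insert _ _))))))
  · exact Set.mem_insert_of_mem _ (Set.mem_insert_of_mem _ (Set.mem_insert_of_mem _
      (Set.mem_insert_of_mem _ (Set.mem_insert_of_mem _ (Set.mem_insert_of_mem _
      (Set.mem_insert_of_mem _ (Set.mem_insert _ _)))))))
  · exact Set.mem_insert_of_mem _ (Set.mem_insert_of_mem _ (Set.mem_insert_of_mem _
      (Set.mem_insert_of_mem _ (Set.mem_insert_of_mem _ (Set.mem_insert_of_mem _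
      (Set.mem_insert_of_mem _ (Set.mem_insert_of_mem _ (Set.mem_insert _ _))))))))
  · exact Set.mem_insert_of_mem _ (Set.mem_insert_of_mem _ (Set.mem_insert_of_mem _
      (Set.mem_insert_of_mem _ (Set.mem_insert_of_mem _ (Set.mem_insert_of_mem _
      (Set.mem_insert_of_mem _ (Set.mem_insert_of_mem _ (Set.mem_insert_of_mem _
      (Set.mem_insert _ _)))))))))
  · exact Set.mem_insert_of_mem _ (Set.mem_insert_of_mem _ (Set.mem_insert_of_mem _
      (Set.mem_insert_of_mem _ (Set.mem_insert_of_mem _ (Set.mem_insert_of_mem _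
      (Set.mem_insert_of_mem _ (Set.mem_insert_of_mem _ (Set.mem_insert_of_mem _
      (Set.mem_insert_of_mem _ (Set.mem_insert _ _))))))))))
  · exact Set.mem_insert_of_mem _ (Set.mem_insert_of_mem _ (Set.mem_insert_of_mem _
      (Set.mem_insert_of_mem _ (Set.mem_insert_of_mem _ (Set.mem_insert_of_mem _
      (Set.mem_insert_of_mem _ (Set.mem_insert_of_mem _ (Set.mem_insert_of_mem _
      (Set.mem_insert_of_mem _ (Set.mem_insert_of_mem _ (Set.mem_singleton _)))))))))))

lemma combo (a b u t : ℝ) (h1 : -1 ≤ t) (h2 : t ≤ 1) (h3 : -1 ≤ u) (h4 : u ≤ 1 + t)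
    (h5 : -1 ≤ a) (h6 : a ≤ 2 + t) (h7 : -1 ≤ b) (h8 : b ≤ 1 + t - a) :
    (![a,b,u,t] : Fin 4 → ℝ) ∈ D6 := by
  have d2 : (0:ℝ) < 2 + t := by linarith
  have d3 : (0:ℝ) < 3 + t := by linarith
  have hDpos : (0:ℝ) < (3+t)*((2+t)*2) := by positivity
  have hD : ((3+t)*((2+t)*2) : ℝ) ≠ 0 := ne_of_gt hDpos
  set w : Fin 12 → ℝ := fun i => nV a b u t i / ((3+t)*((2+t)*2)) with hw
  have hw0 : ∀ i ∈ Finset.univ (α := Fin 12), 0 ≤ w i := fun i _ =>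
    div_nonneg (nV_nonneg a b u t h1 h2 h3 h4 h5 h7 h8 i) (le_of_lt hDpos)
  have hsum : ∑ i, w i = 1 := by
    rw [hw, ← Finset.sum_div, sum_nV, div_self hD]
  have frac : ∀ j : Fin 4, (∑ i, w i • zV i) j
      = (∑ i, nV a b u t i * zV i j)/((3+t)*((2+t)*2)) := by
    intro j
    rw [Finset.sum_apply, Finset.sum_div]
    refine Finset.sum_congr rfl fun i _ => ?_
    rw [hw, Pi.smul_apply, smul_eq_mul, div_mul_eq_mul_div]
  have e0 : (∑ i, w i • zV i) 0 = (![a,b,u,t] : Fin 4 → ℝ) 0 := by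
    rw [frac 0, sum_nz0, mul_comm, mul_div_assoc, div_self hD, mul_one]; rfl
  have e1 : (∑ i, w i • zV i) 1 = (![a,b,u,t] : Fin 4 → ℝ) 1 := by
    rw [frac 1, sum_nz1, mul_comm, mul_div_assoc, div_self hD, mul_one]; rfl
  have e2 : (∑ i, w i • zV i) 2 = (![a,b,u,t] : Fin 4 → ℝ) 2 := by
    rw [frac 2, sum_nz2, mul_comm, mul_div_assoc, div_self hD, mul_one]; rfl
  have e3 : (∑ i, w i • zV i) 3 = (![a,b,u,t] : Fin 4 → ℝ) 3 := by
    rw [frac 3, sum_nz3, mul_comm, mul_div_assoc, div_self hD, mul_one]; rfl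
  have hcm : Finset.univ.centerMass w zV = ![a,b,u,t] := by
    rw [Finset.centerMass, hsum, inv_one, one_smul]
    funext j
    fin_cases j
    exacts [e0, e1, e2, e3]
  rw [← hcm]
  exact Finset.centerMass_mem_convexHull _ hw0 (by rw [hsum]; norm_num)
    (fun i _ => zV_mem i)

lemma S_subset_D6 : S ⊆ D6 := by
  intro x hx
  rw [mem_S] at hx
  obtain ⟨⟨h1,h2⟩,⟨h3,h4⟩,⟨h5,h6⟩,⟨h7,h8⟩⟩ := hx
  have hxeq : x = ![x 0, x 1, x 2, x 3] := by
    funext j; fin_cases j <;> rfl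
  rw [hxeq]
  exact combo _ _ _ _ h1 h2 h3 h4 h5 h6 h7 h8

lemma D6_eq_S : D6 = S := Set.Subset.antisymm D6_subset_S S_subset_D6

lemma vec_mem_S (a b u t : ℝ) : (![a,b,u,t] ∈ S) ↔
    ((-1 ≤ t ∧ t ≤ 1) ∧ (-1 ≤ u ∧ u ≤ 1 + t) ∧
     (-1 ≤ a ∧ a ≤ 2 + t) ∧ (-1 ≤ b ∧ b ≤ 1 + t - a)) := by
  rw [mem_S]
  norm_num [Matrix.cons_val_zero, Matrix.cons_val_one, Matrix.head_cons, Matrix.cons_val_two, Matrix.cons_val_three, Matrix.tail_cons]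

lemma measurableSet_S : MeasurableSet S := by
  have h : ∀ (f g : (Fin 4 → ℝ) → ℝ), Measurable f → Measurable g →
      MeasurableSet {x | f x ≤ g x} := fun f g hf hg => measurableSet_le hf hg
  have m : ∀ i : Fin 4, Measurable fun x : Fin 4 → ℝ => x i := fun i => measurable_pi_apply i
  exact (((h _ _ measurable_const (m 3)).inter (h _ _ (m 3) measurable_const)).inter
    (((h _ _ measurable_const (m 2)).inter (h _ _ (m 2) (measurable_const.add (m 3)))).inter
    (((h _ _ measurable_const (m 0)).inter (h _ _ (m 0) (measurable_const.add (m 3)))).inter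
     ((h _ _ measurable_const (m 1)).inter (h _ _ (m 1)
       ((measurable_const.add (m 3)).sub (m 0)))))))

lemma if_int (P : Prop) [Decidable P] (lo hi : ℝ) (g : ℝ → ℝ) :
    (∫ x : ℝ, (if P ∧ (lo ≤ x ∧ x ≤ hi) then g x else 0)) =
      if P then ∫ x in Set.Icc lo hi, g x else 0 := by
  split_ifs with h
  · rw [← integral_indicator measurableSet_Icc]
    congr 1; funext x
    by_cases hx : x ∈ Set.Icc lo hi
    · simp [Set.indicator_of_mem hx, h, Set.mem_Icc.1 hx]
    · simp [Set.indicator_of_notMem hx, Set.mem_Icc, h]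
      intro h1 h2; exact absurd (Set.mem_Icc.2 ⟨h1, h2⟩) hx
  · simp [h]

lemma polyInt (c0 c1 c2 c3 c4 c5 : ℝ) {lo hi : ℝ} (h : lo ≤ hi) :
    (∫ x in Set.Icc lo hi, (c0 + c1*x + c2*x^2 + c3*x^3 + c4*x^4 + c5*x^5)) =
      (c0*hi + c1/2*hi^2 + c2/3*hi^3 + c3/4*hi^4 + c4/5*hi^5 + c5/6*hi^6)
      - (c0*lo + c1/2*lo^2 + c2/3*lo^3 + c3/4*lo^4 + c4/5*lo^5 + c5/6*lo^6) := by
  rw [MeasureTheory.integral_Icc_eq_integral_Ioc, ← intervalIntegral.integral_of_le h]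
  have key : ∀ x : ℝ, HasDerivAt (fun y : ℝ => c0*y + c1/2*y^2 + c2/3*y^3 + c3/4*y^4 + c4/5*y^5 + c5/6*y^6)
      (c0 + c1*x + c2*x^2 + c3*x^3 + c4*x^4 + c5*x^5) x := by
    intro x
    have h1 := ((hasDerivAt_id x).const_mul c0)
    have h2 := ((hasDerivAt_pow 2 x).const_mul (c1/2))
    have h3 := ((hasDerivAt_pow 3 x).const_mul (c2/3))
    have h4 := ((hasDerivAt_pow 4 x).const_mul (c3/4))
    have h5 := ((hasDerivAt_pow 5 x).const_mul (c4/5))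
    have h6 := ((hasDerivAt_pow 6 x).const_mul (c5/6))
    refine HasDerivAt.congr_deriv (((((h1.add h2).add h3).add h4).add h5).add h6) ?_
    ring
  rw [intervalIntegral.integral_eq_sub_of_hasDerivAt (fun x _ => key x)
    (Continuous.intervalIntegrable (by continuity) _ _)]



lemma integrable_aux {k : ℕ} (embed : (Fin k → ℝ) → (Fin 4 → ℝ)) (hc : Continuous embed)
    (hsub : embed ⁻¹' S ⊆ Set.Icc (fun _ => (-1:ℝ)) (fun _ => (3:ℝ)))
    (f : (Fin 4 → ℝ) → ℝ) (hf : Continuous f) :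
    Integrable (fun z : Fin k → ℝ => S.indicator f (embed z)) := by
  have heq : (fun z : Fin k → ℝ => S.indicator f (embed z)) =
      Set.indicator (embed ⁻¹' S) (fun z => f (embed z)) := by
    funext z; by_cases h : embed z ∈ S <;>
      simp [Set.indicator, h, Set.mem_preimage]
  rw [heq, integrable_indicator_iff (hc.measurable measurableSet_S)]
  exact ((hf.comp hc).continuousOn.integrableOn_compact isCompact_Icc).mono_set hsub

lemma ins3 (t : ℝ) (z : Fin 3 → ℝ) : Fin.insertNth (3 : Fin 4) t z = ![z 0, z 1, z 2, t] := by
  funext i; fin_cases i <;> simp [Fin.insertNth] <;> rfl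

lemma ins2 (u : ℝ) (w : Fin 2 → ℝ) : Fin.insertNth (2 : Fin 3) u w = ![w 0, w 1, u] := by
  funext i; fin_cases i <;> simp [Fin.insertNth] <;> rfl

lemma ins0 (a : ℝ) (v : Fin 1 → ℝ) : Fin.insertNth (0 : Fin 2) a v = ![a, v 0] := by
  funext i; fin_cases i <;> simp [Fin.insertNth]

lemma Lb (f : (Fin 4 → ℝ) → ℝ) (hf : Continuous f) (t u a : ℝ) :
    (∫ v : Fin 1 → ℝ, S.indicator f ![a, v 0, u, t]) =
      if ((-1 ≤ t ∧ t ≤ 1) ∧ (-1 ≤ u ∧ u ≤ 1+t)) ∧ (-1 ≤ a ∧ a ≤ 2+t) then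
        ∫ b in Set.Icc (-1:ℝ) (1+t-a), f ![a,b,u,t] else 0 := by
  have step : (∫ v : Fin 1 → ℝ, S.indicator f ![a, v 0, u, t])
      = ∫ b : ℝ, S.indicator f ![a, b, u, t] := by
    rw [← (volume_preserving_funUnique (Fin 1) ℝ).integral_comp'
      (fun b => S.indicator f ![a, b, u, t])]
    rfl
  rw [step]
  have key : ∀ b : ℝ, S.indicator f ![a,b,u,t]
      = if (((-1 ≤ t ∧ t ≤ 1) ∧ (-1 ≤ u ∧ u ≤ 1+t)) ∧ (-1 ≤ a ∧ a ≤ 2+t)) ∧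
          (-1 ≤ b ∧ b ≤ 1+t-a) then f ![a,b,u,t] else 0 := by
    intro b
    by_cases h : ![a,b,u,t] ∈ S
    · rw [Set.indicator_of_mem h, if_pos]
      rw [vec_mem_S] at h; tauto
    · rw [Set.indicator_of_notMem h, if_neg]
      rw [vec_mem_S] at h; tauto
  simp_rw [key]
  exact if_int _ _ _ _

lemma cont_embed2 (u t : ℝ) : Continuous fun w : Fin 2 → ℝ => (![w 0, w 1, u, t] : Fin 4 → ℝ) := by
  refine continuous_pi fun i => ?_
  fin_cases i <;> simp <;>
    first | exact continuous_apply 0 | exact continuous_apply 1 | exact continuous_const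

lemma sub_embed2 (u t : ℝ) :
    (fun w : Fin 2 → ℝ => (![w 0, w 1, u, t] : Fin 4 → ℝ)) ⁻¹' S ⊆
      Set.Icc (fun _ => (-1:ℝ)) (fun _ => (3:ℝ)) := by
  intro w hw
  rw [Set.mem_preimage, vec_mem_S] at hw
  obtain ⟨⟨h1,h2⟩,⟨h3,h4⟩,⟨h5,h6⟩,⟨h7,h8⟩⟩ := hw
  rw [Set.mem_Icc]
  constructor <;> (intro i; fin_cases i) <;> simp <;> linarith

lemma La (f : (Fin 4 → ℝ) → ℝ) (hf : Continuous f) (t u : ℝ) :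
    (∫ w : Fin 2 → ℝ, S.indicator f ![w 0, w 1, u, t]) =
      if ((-1 ≤ t ∧ t ≤ 1) ∧ (-1 ≤ u ∧ u ≤ 1+t)) then
        ∫ a in Set.Icc (-1:ℝ) (2+t), ∫ b in Set.Icc (-1:ℝ) (1+t-a), f ![a,b,u,t] else 0 := by
  have mp := (measurePreserving_piFinSuccAbove (fun _ : Fin 2 => (volume : Measure ℝ)) 0).symm
  have hIg : Integrable (fun w : Fin 2 → ℝ => S.indicator f ![w 0, w 1, u, t]) :=
    integrable_aux _ (cont_embed2 u t) (sub_embed2 u t) f hf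
  have hcomp : (fun p : ℝ × (Fin 1 → ℝ) =>
        (fun w : Fin 2 → ℝ => S.indicator f ![w 0, w 1, u, t])
          ((MeasurableEquiv.piFinSuccAbove (fun _ : Fin 2 => ℝ) 0).symm p))
      = fun p => S.indicator f ![p.1, p.2 0, u, t] := by
    funext p
    simp only [MeasurableEquiv.piFinSuccAbove_symm_apply, Fin.insertNthEquiv_apply, ins0]
    norm_num
  have hIg' : Integrable (fun w : Fin 2 → ℝ => S.indicator f ![w 0, w 1, u, t])
      (Measure.pi fun _ => volume) := by rw [← volume_pi]; exact hIg
  have hInt2 : Integrable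
      (fun p : ℝ × (Fin 1 → ℝ) => S.indicator f ![p.1, p.2 0, u, t])
      ((volume : Measure ℝ).prod (Measure.pi fun _ => volume)) := by
    have h2 := (mp.integrable_comp_emb (MeasurableEquiv.measurableEmbedding _)).2 hIg'
    rw [Function.comp_def, hcomp] at h2
    exact h2
  calc (∫ w : Fin 2 → ℝ, S.indicator f ![w 0, w 1, u, t])
      = ∫ w : Fin 2 → ℝ, S.indicator f ![w 0, w 1, u, t] ∂(Measure.pi fun _ => volume) := by
        rw [← volume_pi]
    _ = ∫ p : ℝ × (Fin 1 → ℝ), S.indicator f ![p.1, p.2 0, u, t]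
          ∂((volume : Measure ℝ).prod (Measure.pi fun _ => volume)) := by
        rw [← mp.integral_comp' (fun w => S.indicator f ![w 0, w 1, u, t]), hcomp]
    _ = ∫ a : ℝ, ∫ v : Fin 1 → ℝ, S.indicator f ![a, v 0, u, t] ∂(Measure.pi fun _ => volume) :=
        integral_prod _ hInt2
    _ = ∫ a : ℝ, if ((-1 ≤ t ∧ t ≤ 1) ∧ (-1 ≤ u ∧ u ≤ 1+t)) ∧ (-1 ≤ a ∧ a ≤ 2+t) then
          ∫ b in Set.Icc (-1:ℝ) (1+t-a), f ![a,b,u,t] else 0 := by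
        congr 1; funext a; rw [← volume_pi]; exact Lb f hf t u a
    _ = _ := if_int _ _ _ _

lemma cont_embed3 (t : ℝ) : Continuous fun z : Fin 3 → ℝ => (![z 0, z 1, z 2, t] : Fin 4 → ℝ) := by
  refine continuous_pi fun i => ?_
  fin_cases i <;> simp <;>
    (first
      | exact continuous_apply 0
      | exact continuous_apply 1
      | exact continuous_apply 2
      | exact continuous_const)

lemma sub_embed3 (t : ℝ) :
    (fun z : Fin 3 → ℝ => (![z 0, z 1, z 2, t] : Fin 4 → ℝ)) ⁻¹' S ⊆
      Set.Icc (fun _ => (-1:ℝ)) (fun _ => (3:ℝ)) := by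
  intro z hz
  rw [Set.mem_preimage, vec_mem_S] at hz
  obtain ⟨⟨h1,h2⟩,⟨h3,h4⟩,⟨h5,h6⟩,⟨h7,h8⟩⟩ := hz
  rw [Set.mem_Icc]
  constructor <;> (intro i; fin_cases i) <;> simp <;> linarith

lemma Lu (f : (Fin 4 → ℝ) → ℝ) (hf : Continuous f) (t : ℝ) :
    (∫ z : Fin 3 → ℝ, S.indicator f ![z 0, z 1, z 2, t]) =
      if (-1 ≤ t ∧ t ≤ 1) then
        ∫ u in Set.Icc (-1:ℝ) (1+t), ∫ a in Set.Icc (-1:ℝ) (2+t),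
          ∫ b in Set.Icc (-1:ℝ) (1+t-a), f ![a,b,u,t] else 0 := by
  have mp := (measurePreserving_piFinSuccAbove (fun _ : Fin 3 => (volume : Measure ℝ)) 2).symm
  have hIg : Integrable (fun z : Fin 3 → ℝ => S.indicator f ![z 0, z 1, z 2, t]) :=
    integrable_aux _ (cont_embed3 t) (sub_embed3 t) f hf
  have hcomp : (fun p : ℝ × (Fin 2 → ℝ) =>
        (fun z : Fin 3 → ℝ => S.indicator f ![z 0, z 1, z 2, t])
          ((MeasurableEquiv.piFinSuccAbove (fun _ : Fin 3 => ℝ) 2).symm p))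
      = fun p => S.indicator f ![p.2 0, p.2 1, p.1, t] := by
    funext p
    simp only [MeasurableEquiv.piFinSuccAbove_symm_apply, Fin.insertNthEquiv_apply, ins2]
    norm_num [Matrix.cons_val_two, Matrix.tail_cons, Matrix.head_cons]
  have hIg' : Integrable (fun z : Fin 3 → ℝ => S.indicator f ![z 0, z 1, z 2, t])
      (Measure.pi fun _ => volume) := by rw [← volume_pi]; exact hIg
  have hInt2 : Integrable
      (fun p : ℝ × (Fin 2 → ℝ) => S.indicator f ![p.2 0, p.2 1, p.1, t])
      ((volume : Measure ℝ).prod (Measure.pi fun _ => volume)) := by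
    have h2 := (mp.integrable_comp_emb (MeasurableEquiv.measurableEmbedding _)).2 hIg'
    rw [Function.comp_def, hcomp] at h2
    exact h2
  calc (∫ z : Fin 3 → ℝ, S.indicator f ![z 0, z 1, z 2, t])
      = ∫ z : Fin 3 → ℝ, S.indicator f ![z 0, z 1, z 2, t] ∂(Measure.pi fun _ => volume) := by
        rw [← volume_pi]
    _ = ∫ p : ℝ × (Fin 2 → ℝ), S.indicator f ![p.2 0, p.2 1, p.1, t]
          ∂((volume : Measure ℝ).prod (Measure.pi fun _ => volume)) := by
        rw [← mp.integral_comp' (fun z => S.indicator f ![z 0, z 1, z 2, t]), hcomp]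
    _ = ∫ u : ℝ, ∫ w : Fin 2 → ℝ, S.indicator f ![w 0, w 1, u, t] ∂(Measure.pi fun _ => volume) :=
        integral_prod _ hInt2
    _ = ∫ u : ℝ, if ((-1 ≤ t ∧ t ≤ 1) ∧ (-1 ≤ u ∧ u ≤ 1+t)) then
          ∫ a in Set.Icc (-1:ℝ) (2+t), ∫ b in Set.Icc (-1:ℝ) (1+t-a), f ![a,b,u,t] else 0 := by
        congr 1; funext u; rw [← volume_pi]; exact La f hf t u
    _ = _ := if_int _ _ _ _

lemma sub_embed4 :
    (fun x : Fin 4 → ℝ => x) ⁻¹' S ⊆ Set.Icc (fun _ => (-1:ℝ)) (fun _ => (3:ℝ)) := by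
  intro x hx
  rw [Set.mem_preimage, mem_S] at hx
  obtain ⟨⟨h1,h2⟩,⟨h3,h4⟩,⟨h5,h6⟩,⟨h7,h8⟩⟩ := hx
  rw [Set.mem_Icc]
  constructor <;> (intro i; fin_cases i) <;> simp <;> linarith

lemma master (f : (Fin 4 → ℝ) → ℝ) (hf : Continuous f) :
    (∫ x in S, f x) =
      ∫ t in Set.Icc (-1:ℝ) 1, ∫ u in Set.Icc (-1:ℝ) (1+t), ∫ a in Set.Icc (-1:ℝ) (2+t),
        ∫ b in Set.Icc (-1:ℝ) (1+t-a), f ![a,b,u,t] := by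
  have mp := (measurePreserving_piFinSuccAbove (fun _ : Fin 4 => (volume : Measure ℝ)) 3).symm
  have hIg : Integrable (fun x : Fin 4 → ℝ => S.indicator f x) :=
    integrable_aux (fun x => x) continuous_id sub_embed4 f hf
  have hcomp : (fun p : ℝ × (Fin 3 → ℝ) =>
        (fun x : Fin 4 → ℝ => S.indicator f x)
          ((MeasurableEquiv.piFinSuccAbove (fun _ : Fin 4 => ℝ) 3).symm p))
      = fun p => S.indicator f ![p.2 0, p.2 1, p.2 2, p.1] := by
    funext p
    have h1 : (MeasurableEquiv.piFinSuccAbove (fun _ : Fin 4 => ℝ) 3).symm p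
        = Fin.insertNth (3 : Fin 4) p.1 p.2 := rfl
    rw [h1, ins3]
  have hIg' : Integrable (fun x : Fin 4 → ℝ => S.indicator f x)
      (Measure.pi fun _ => volume) := by rw [← volume_pi]; exact hIg
  have hInt2 : Integrable
      (fun p : ℝ × (Fin 3 → ℝ) => S.indicator f ![p.2 0, p.2 1, p.2 2, p.1])
      ((volume : Measure ℝ).prod (Measure.pi fun _ => volume)) := by
    have h2 := (mp.integrable_comp_emb (MeasurableEquiv.measurableEmbedding _)).2 hIg'
    rw [Function.comp_def, hcomp] at h2
    exact h2
  calc (∫ x in S, f x)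
      = ∫ x : Fin 4 → ℝ, S.indicator f x := (integral_indicator measurableSet_S).symm
    _ = ∫ x : Fin 4 → ℝ, S.indicator f x ∂(Measure.pi fun _ => volume) := by rw [← volume_pi]
    _ = ∫ p : ℝ × (Fin 3 → ℝ), S.indicator f ![p.2 0, p.2 1, p.2 2, p.1]
          ∂((volume : Measure ℝ).prod (Measure.pi fun _ => volume)) := by
        rw [← mp.integral_comp' (fun x => S.indicator f x), hcomp]
    _ = ∫ t : ℝ, ∫ z : Fin 3 → ℝ, S.indicator f ![z 0, z 1, z 2, t] ∂(Measure.pi fun _ => volume) :=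
        integral_prod _ hInt2
    _ = ∫ t : ℝ, if True ∧ (-1 ≤ t ∧ t ≤ 1) then
          ∫ u in Set.Icc (-1:ℝ) (1+t), ∫ a in Set.Icc (-1:ℝ) (2+t),
            ∫ b in Set.Icc (-1:ℝ) (1+t-a), f ![a,b,u,t] else 0 := by
        congr 1; funext t; rw [← volume_pi, Lu f hf t]; simp only [true_and]
    _ = _ := by rw [if_int]; simp only [if_true]

lemma eval (k0 k1 k2 k3 k4 k5 k6 k7 k8 : ℝ) :
    (∫ x in S, (k0 + k1 * x 0 + k2 * x 1 + k3 * x 2 + k4 * x 3 + k5 * (x 0 * x 3)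
      + k6 * (x 1 * x 3) + k7 * (x 2 * x 3) + k8 * (x 3 * x 3))) =
      (62/3)*k0 + (12/5)*k1 + (12/5)*k2 + (18/5)*k3 + (36/5)*k4 + (38/15)*k5 + (38/15)*k6
        + (19/5)*k7 + (38/5)*k8 := by
  have hcont : Continuous (fun x : Fin 4 → ℝ => k0 + k1 * x 0 + k2 * x 1 + k3 * x 2 + k4 * x 3
      + k5 * (x 0 * x 3) + k6 * (x 1 * x 3) + k7 * (x 2 * x 3) + k8 * (x 3 * x 3)) := by
    have m : ∀ i : Fin 4, Continuous fun x : Fin 4 → ℝ => x i := fun i => continuous_apply i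
    fun_prop
  rw [master _ hcont]
  have ht : Set.EqOn
      (fun t : ℝ => ∫ u in Set.Icc (-1:ℝ) (1+t), ∫ a in Set.Icc (-1:ℝ) (2+t),
        ∫ b in Set.Icc (-1:ℝ) (1+t-a), (fun x : Fin 4 → ℝ => k0 + k1 * x 0 + k2 * x 1
          + k3 * x 2 + k4 * x 3 + k5 * (x 0 * x 3) + k6 * (x 1 * x 3) + k7 * (x 2 * x 3)
          + k8 * (x 3 * x 3)) ![a,b,u,t])
      (fun t : ℝ => (9*k0) + (9*k4 + (9/2)*k3 + 3*k2 + 3*k1 + (21/2)*k0)*t + (9*k8 + (9/2)*k7 + 3*k6 + 3*k5 + (21/2)*k4 + (21/4)*k3 + (7/2)*k2 + (7/2)*k1 + 4*k0)*t^2 + ((21/2)*k8 + (21/4)*k7 + (7/2)*k6 + (7/2)*k5 + 4*k4 + 2*k3 + (4/3)*k2 + (4/3)*k1 + (1/2)*k0)*t^3 + (4*k8 + 2*k7 + (4/3)*k6 + (4/3)*k5 + (1/2)*k4 + (1/4)*k3 + (1/6)*k2 + (1/6)*k1)*t^4 + ((1/2)*k8 + (1/4)*k7 + (1/6)*k6 +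 (1/6)*k5)*t^5)
      (Set.Icc (-1:ℝ) 1) := by
    intro t htm
    obtain ⟨ht1, ht2⟩ := Set.mem_Icc.mp htm
    have hu : Set.EqOn
        (fun u : ℝ => ∫ a in Set.Icc (-1:ℝ) (2+t), ∫ b in Set.Icc (-1:ℝ) (1+t-a),
          (fun x : Fin 4 → ℝ => k0 + k1 * x 0 + k2 * x 1 + k3 * x 2 + k4 * x 3
            + k5 * (x 0 * x 3) + k6 * (x 1 * x 3) + k7 * (x 2 * x 3)
            + k8 * (x 3 * x 3)) ![a,b,u,t])
        (fun u : ℝ => ((9/2)*k0 + (9/2)*t*k4 + (3/2)*t*k2 + (3/2)*t*k1 + 3*t*k0 + (9/2)*t^2*k8 + (3/2)*t^2*k6 + (3/2)*t^2*k5 + 3*t^2*k4 + 1*t^2*k2 + 1*t^2*k1 + (1/2)*t^2*k0 + 3*t^3*k8 + 1*t^3*k6 + 1*t^3*k5 + (1/2)*t^3*k4 + (1/6)*t^3*k2 + (1/6)*t^3*k1 + (1/2)*t^4*k8 + (1/6)*t^4*k6 + (1/6)*t^4*k5) + ((9/2)*k3 + (9/2)*t*k7 + 3*t*k3 + 3*t^2*k7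 + (1/2)*t^2*k3 + (1/2)*t^3*k7)*u + 0*u^2 + 0*u^3 + 0*u^4 + 0*u^5)
        (Set.Icc (-1:ℝ) (1+t)) := by
      intro u hum
      obtain ⟨hu1, hu2⟩ := Set.mem_Icc.mp hum
      have ha : Set.EqOn
          (fun a : ℝ => ∫ b in Set.Icc (-1:ℝ) (1+t-a),
            (fun x : Fin 4 → ℝ => k0 + k1 * x 0 + k2 * x 1 + k3 * x 2 + k4 * x 3
              + k5 * (x 0 * x 3) + k6 * (x 1 * x 3) + k7 * (x 2 * x 3)
              + k8 * (x 3 * x 3)) ![a,b,u,t])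
          (fun a : ℝ => (2*k0 + 2*t*k4 + 1*t*k2 + 1*t*k0 + 2*t^2*k8 + 1*t^2*k6 + 1*t^2*k4 + (1/2)*t^2*k2 + 1*t^3*k8 + (1/2)*t^3*k6 + 2*u*k3 + 2*u*t*k7 + 1*u*t*k3 + 1*u*t^2*k7) + ((-1)*k2 + 2*k1 + (-1)*k0 + (-1)*t*k6 + 2*t*k5 + (-1)*t*k4 + (-1)*t*k2 + 1*t*k1 + (-1)*t^2*k8 + (-1)*t^2*k6 + 1*t^2*k5 + (-1)*u*k3 + (-1)*u*t*k7)*a + ((1/2)*k2 + (-1)*k1 + (1/2)*t*k6 + (-1)*t*k5)*a^2 + 0*a^3 + 0*a^4 + 0*a^5)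
          (Set.Icc (-1:ℝ) (2+t)) := by
        intro a ham
        obtain ⟨ha1, ha2⟩ := Set.mem_Icc.mp ham
        show (∫ b in Set.Icc (-1:ℝ) (1+t-a), (fun x : Fin 4 → ℝ => k0 + k1 * x 0 + k2 * x 1
            + k3 * x 2 + k4 * x 3 + k5 * (x 0 * x 3) + k6 * (x 1 * x 3) + k7 * (x 2 * x 3)
            + k8 * (x 3 * x 3)) ![a,b,u,t]) = _
        rw [show (fun b : ℝ => (fun x : Fin 4 → ℝ => k0 + k1 * x 0 + k2 * x 1 + k3 * x 2
            + k4 * x 3 + k5 * (x 0 * x 3) + k6 * (x 1 * x 3) + k7 * (x 2 * x 3)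
            + k8 * (x 3 * x 3)) ![a,b,u,t])
          = (fun b : ℝ => ((1*k0 + 1*t*k4 + 1*t^2*k8 + 1*u*k3 + 1*u*t*k7 + 1*a*k1 + 1*a*t*k5)) + ((1*k2 + 1*t*k6))*b + 0*b^2 + 0*b^3 + 0*b^4 + 0*b^5) from
            funext fun b => by show k0 + k1 * a + k2 * b + k3 * u + k4 * t + k5 * (a * t)
                + k6 * (b * t) + k7 * (u * t) + k8 * (t * t) = _; ring]
        rw [polyInt _ _ _ _ _ _ (by linarith : (-1:ℝ) ≤ 1+t-a)]
        ring
      show (∫ a in Set.Icc (-1:ℝ) (2+t), ∫ b in Set.Icc (-1:ℝ) (1+t-a),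
          (fun x : Fin 4 → ℝ => k0 + k1 * x 0 + k2 * x 1 + k3 * x 2 + k4 * x 3
            + k5 * (x 0 * x 3) + k6 * (x 1 * x 3) + k7 * (x 2 * x 3)
            + k8 * (x 3 * x 3)) ![a,b,u,t]) = _
      rw [setIntegral_congr_fun measurableSet_Icc ha,
        polyInt _ _ _ _ _ _ (by linarith : (-1:ℝ) ≤ 2+t)]
      ring
    show (∫ u in Set.Icc (-1:ℝ) (1+t), ∫ a in Set.Icc (-1:ℝ) (2+t),
        ∫ b in Set.Icc (-1:ℝ) (1+t-a), (fun x : Fin 4 → ℝ => k0 + k1 * x 0 + k2 * x 1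
          + k3 * x 2 + k4 * x 3 + k5 * (x 0 * x 3) + k6 * (x 1 * x 3) + k7 * (x 2 * x 3)
          + k8 * (x 3 * x 3)) ![a,b,u,t]) = _
    rw [setIntegral_congr_fun measurableSet_Icc hu,
      polyInt _ _ _ _ _ _ (by linarith : (-1:ℝ) ≤ 1+t)]
    ring
  rw [setIntegral_congr_fun measurableSet_Icc ht,
    polyInt _ _ _ _ _ _ (by norm_num : (-1:ℝ) ≤ 1)]
  ring


lemma int_theta : (∫ x in S, (2790 * x 3 - 972) / 1973) = 0 := by
  rw [show (fun x : Fin 4 → ℝ => (2790 * x 3 - 972) / 1973)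
      = (fun x : Fin 4 → ℝ => (-972/1973) + 0 * x 0 + 0 * x 1 + 0 * x 2 + (2790/1973) * x 3
        + 0 * (x 0 * x 3) + 0 * (x 1 * x 3) + 0 * (x 2 * x 3) + 0 * (x 3 * x 3)) from
    funext fun x => by ring]
  rw [eval]
  norm_num

lemma int_x0 : (∫ x in S, x 0 * ((2790 * x 3 - 972) / 1973)) = ∫ x in S, x 0 := by
  rw [show (fun x : Fin 4 → ℝ => x 0 * ((2790 * x 3 - 972) / 1973))
      = (fun x : Fin 4 → ℝ => 0 + (-972/1973) * x 0 + 0 * x 1 + 0 * x 2 + 0 * x 3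
        + (2790/1973) * (x 0 * x 3) + 0 * (x 1 * x 3) + 0 * (x 2 * x 3) + 0 * (x 3 * x 3)) from
    funext fun x => by ring]
  rw [show (fun x : Fin 4 → ℝ => x 0)
      = (fun x : Fin 4 → ℝ => 0 + 1 * x 0 + 0 * x 1 + 0 * x 2 + 0 * x 3
        + 0 * (x 0 * x 3) + 0 * (x 1 * x 3) + 0 * (x 2 * x 3) + 0 * (x 3 * x 3)) from
    funext fun x => by ring]
  rw [eval, eval]
  norm_num

lemma int_x1 : (∫ x in S, x 1 * ((2790 * x 3 - 972) / 1973)) = ∫ x in S, x 1 := by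
  rw [show (fun x : Fin 4 → ℝ => x 1 * ((2790 * x 3 - 972) / 1973))
      = (fun x : Fin 4 → ℝ => 0 + 0 * x 0 + (-972/1973) * x 1 + 0 * x 2 + 0 * x 3
        + 0 * (x 0 * x 3) + (2790/1973) * (x 1 * x 3) + 0 * (x 2 * x 3) + 0 * (x 3 * x 3)) from
    funext fun x => by ring]
  rw [show (fun x : Fin 4 → ℝ => x 1)
      = (fun x : Fin 4 → ℝ => 0 + 0 * x 0 + 1 * x 1 + 0 * x 2 + 0 * x 3
        + 0 * (x 0 * x 3) + 0 * (x 1 * x 3) + 0 * (x 2 * x 3) + 0 * (x 3 * x 3)) from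
    funext fun x => by ring]
  rw [eval, eval]
  norm_num

lemma int_x2 : (∫ x in S, x 2 * ((2790 * x 3 - 972) / 1973)) = ∫ x in S, x 2 := by
  rw [show (fun x : Fin 4 → ℝ => x 2 * ((2790 * x 3 - 972) / 1973))
      = (fun x : Fin 4 → ℝ => 0 + 0 * x 0 + 0 * x 1 + (-972/1973) * x 2 + 0 * x 3
        + 0 * (x 0 * x 3) + 0 * (x 1 * x 3) + (2790/1973) * (x 2 * x 3) + 0 * (x 3 * x 3)) from
    funext fun x => by ring]
  rw [show (fun x : Fin 4 → ℝ => x 2)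
      = (fun x : Fin 4 → ℝ => 0 + 0 * x 0 + 0 * x 1 + 1 * x 2 + 0 * x 3
        + 0 * (x 0 * x 3) + 0 * (x 1 * x 3) + 0 * (x 2 * x 3) + 0 * (x 3 * x 3)) from
    funext fun x => by ring]
  rw [eval, eval]
  norm_num

lemma int_x3 : (∫ x in S, x 3 * ((2790 * x 3 - 972) / 1973)) = ∫ x in S, x 3 := by
  rw [show (fun x : Fin 4 → ℝ => x 3 * ((2790 * x 3 - 972) / 1973))
      = (fun x : Fin 4 → ℝ => 0 + 0 * x 0 + 0 * x 1 + 0 * x 2 + (-972/1973) * x 3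
        + 0 * (x 0 * x 3) + 0 * (x 1 * x 3) + 0 * (x 2 * x 3) + (2790/1973) * (x 3 * x 3)) from
    funext fun x => by ring]
  rw [show (fun x : Fin 4 → ℝ => x 3)
      = (fun x : Fin 4 → ℝ => 0 + 0 * x 0 + 0 * x 1 + 0 * x 2 + 1 * x 3
        + 0 * (x 0 * x 3) + 0 * (x 1 * x 3) + 0 * (x 2 * x 3) + 0 * (x 3 * x 3)) from
    funext fun x => by ring]
  rw [eval, eval]
  norm_num

/-- The extremal affine function of `D₆` is `θ(x) = (2790 x₄ - 972)/1973`: it is affine and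
satisfies `∫_{D₆} θ = 0` and `∫_{D₆} xᵢ θ = ∫_{D₆} xᵢ` for `i = 1, 2, 3, 4`. -/
theorem D6_extremal_affine :
    IsExtremalAffine D6 (fun x => (2790 * x 3 - 972) / 1973) := by
  refine ⟨⟨![0, 0, 0, 2790/1973], -972/1973, fun x => ?_⟩, ?_, ?_⟩
  · rw [Fin.sum_univ_four]
    norm_num [Matrix.cons_val_zero, Matrix.cons_val_one, Matrix.head_cons, Matrix.cons_val_two, Matrix.cons_val_three, Matrix.tail_cons]
    ring
  · rw [D6_eq_S]
    exact int_theta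
  · intro i
    rw [D6_eq_S]
    fin_cases i
    exacts [int_x0, int_x1, int_x2, int_x3]
end
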